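/- arXiv:1409.0699 — 6 statements merged into one kernel-verified Lean document; each statement's English description precedes it below -/
import Mathlib

section
/- Let f ∈ ℝ[X_1,…,X_n] be a symmetric polynomial of total degree d ≥ 1. Set k = ⌊d/2⌋ and d' = min{d, n}. Then there exist polynomials g_0, g_1, …, g_{d'-k} ∈ ℝ[Z_1,…,Z_k] such that f = g_0(p_1,…,p_k) + Σ_{j=k+1}^{d'} g_{j-k}(p_1,…,p_k) · p_j, where all power sums p_i are taken in the variables X_1,…,X_n. -/
open MvPolynomial

/-!
Over a `ℚ`-algebra, Newton's identities express the elementary symmetric polynomials through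
`p₁, …, pₙ`, so a symmetric `f` equals `φ(p₁, …, pₙ)` for some `φ`. Giving the `i`-th variable
of `φ` weight `i` makes `pᵢ` homogeneous of that weight, so the weighted components of `φ` of
weight above `deg f` are sent to the homogeneous components of `f` above its degree, which
vanish; hence `φ` may be taken of weighted degree `≤ d`. Such a monomial contains at most one
`pⱼ` with `j > d / 2`, and that one only to the first power.
-/

open Finset

theorem Finsupp.two_mul_le_of_mem_support_sub_single {ι : Type*} {w : ι → ℕ} {d : ℕ}
    {t : ι →₀ ℕ} (ht : weight w t ≤ d) {i : ι} (hi : t i ≠ 0) (hwi : d < 2 * w i)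
    {i' : ι} (hi' : i' ∈ (t - single i 1).support) : 2 * w i' ≤ d := by
  have hsplit := weight_sub_single_add (w := w) hi
  have hle := le_weight_of_ne_zero' w (mem_support_iff.mp hi')
  omega

namespace MvPolynomial

theorem psum_mem_adjoin_psum {σ R : Type*} [Fintype σ] [CommSemiring R] {n m : ℕ} (hm : 1 ≤ m)
    (hmn : m ≤ n) :
    psum σ R m ∈ Algebra.adjoin R (Set.range fun i : Fin n => psum σ R (i + 1)) :=
  Algebra.subset_adjoin ⟨⟨m - 1, by omega⟩, by simp only [Nat.sub_add_cancel hm]⟩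

section Newton

variable {σ R : Type*} [Fintype σ] [CommRing R] [Algebra ℚ R]

theorem esymm_mem_adjoin_psum {n j : ℕ} (hj : j ≤ n) :
    esymm σ R j ∈ Algebra.adjoin R (Set.range fun i : Fin n => psum σ R (i + 1)) := by
  set S := Algebra.adjoin R (Set.range fun i : Fin n => psum σ R (i + 1))
  induction j using Nat.strong_induction_on with
  | _ j ih =>
  rcases Nat.eq_zero_or_pos j with rfl | hj0
  · simpa only [esymm_zero] using S.one_mem
  have hsign : ∀ k, ((-1) ^ k : MvPolynomial σ R) ∈ S :=
    fun k => S.pow_mem (S.neg_mem S.one_mem) k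
  -- Newton: `j eⱼ = (-1)^(j+1) ∑_{a+b=j, a<j} (-1)^a eₐ p_b`; dividing by `j` needs `ℚ ⊆ R`.
  have hmul : (j : MvPolynomial σ R) * esymm σ R j ∈ S := by
    rw [mul_esymm_eq_sum]
    refine S.mul_mem (hsign _) (S.sum_mem fun a ha => ?_)
    simp only [mem_filter, HasAntidiagonal.mem_antidiagonal] at ha
    exact S.mul_mem (S.mul_mem (hsign _) (ih a.1 ha.2 (by omega)))
      (psum_mem_adjoin_psum (by omega) (by omega))
  have hinv : (j : ℚ)⁻¹ • ((j : MvPolynomial σ R) * esymm σ R j) = esymm σ R j := by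
    rw [← nsmul_eq_mul, ← Nat.cast_smul_eq_nsmul ℚ, smul_smul,
      inv_mul_cancel₀ (by exact_mod_cast hj0.ne'), one_smul]
  rw [← hinv, ← algebraMap_smul R]
  exact S.smul_mem hmul _

theorem IsSymmetric.mem_range_aeval_psum {n : ℕ} (hn : Fintype.card σ ≤ n)
    {f : MvPolynomial σ R} (hf : f.IsSymmetric) :
    f ∈ (aeval (R := R) fun i : Fin n => psum σ R (i + 1)).range := by
  obtain ⟨g, hg⟩ := esymmAlgHom_surjective (R := R) hn ⟨f, hf⟩
  have hfg : f = aeval (fun i : Fin n => esymm σ R (i + 1)) g := by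
    rw [← esymmAlgHom_apply, hg]
  rw [← Algebra.adjoin_range_eq_range_aeval, hfg]
  have hesymm : aeval (fun i : Fin n => esymm σ R (i + 1)) g ∈
      Algebra.adjoin R (Set.range fun i : Fin n => esymm σ R (i + 1)) := by
    rw [Algebra.adjoin_range_eq_range_aeval]
    exact AlgHom.mem_range_self _ g
  refine Algebra.adjoin_le ?_ hesymm
  rintro _ ⟨i, rfl⟩
  exact esymm_mem_adjoin_psum i.2

end Newton

section WeightedDegree

theorem isHomogeneous_psum (σ R : Type*) [Fintype σ] [CommSemiring R] (m : ℕ) :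
    (psum σ R m).IsHomogeneous m :=
  IsHomogeneous.sum _ _ _ fun i _ => isHomogeneous_X_pow i m

variable {ι σ R : Type*} [CommSemiring R] {w : ι → ℕ} {P : ι → MvPolynomial σ R}

theorem isHomogeneous_aeval_monomial (hP : ∀ i, (P i).IsHomogeneous (w i)) (t : ι →₀ ℕ) (c : R) :
    (aeval P (monomial t c)).IsHomogeneous (Finsupp.weight w t) := by
  rw [aeval_monomial, ← zero_add (Finsupp.weight w t), Finsupp.weight_apply, Finsupp.sum,
    Finsupp.prod]
  refine (isHomogeneous_C σ c).mul (IsHomogeneous.prod _ _ _ fun i _ => ?_)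
  rw [smul_eq_mul, mul_comm]
  exact (hP i).pow _

theorem homogeneousComponent_aeval (hP : ∀ i, (P i).IsHomogeneous (w i)) (m : ℕ)
    (φ : MvPolynomial ι R) :
    homogeneousComponent m (aeval P φ) = aeval P (weightedHomogeneousComponent w m φ) := by
  induction φ using MvPolynomial.induction_on' with
  | monomial t c =>
    rw [homogeneousComponent_of_mem (isHomogeneous_aeval_monomial hP t c),
      weightedHomogeneousComponent_of_mem (isWeightedHomogeneous_monomial w t c rfl)]
    split_ifs <;> simp
  | add φ ψ hφ hψ => simp only [map_add, hφ, hψ]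

theorem exists_aeval_eq_and_weight_le_totalDegree (hP : ∀ i, (P i).IsHomogeneous (w i))
    {f : MvPolynomial σ R} (hf : f ∈ (aeval (R := R) P).range) :
    ∃ φ : MvPolynomial ι R, aeval P φ = f ∧
      ∀ t ∈ φ.support, Finsupp.weight w t ≤ f.totalDegree := by
  obtain ⟨φ₀, rfl⟩ := (AlgHom.mem_range _).mp hf
  refine ⟨∑ m ∈ range ((aeval P φ₀).totalDegree + 1), weightedHomogeneousComponent w m φ₀,
    ?_, fun t ht => ?_⟩
  · simp only [map_sum, ← homogeneousComponent_aeval hP, sum_homogeneousComponent]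
  · rw [mem_support_iff, coeff_sum] at ht
    obtain ⟨m, hm, hne⟩ := exists_ne_zero_of_sum_ne_zero ht
    rw [weightedHomogeneousComponent_isWeightedHomogeneous m φ₀ hne]
    exact Nat.lt_succ_iff.mp (mem_range.mp hm)

end WeightedDegree

section LinearAbove

variable (R : Type*) [CommSemiring R] (n k m : ℕ)

def psumLinearAbove : Submodule R (MvPolynomial (Fin n) R) where
  carrier := {f | ∃ g : ℕ → MvPolynomial (Fin k) R,
    f = aeval (fun l : Fin k => psum (Fin n) R (l + 1)) (g 0)
      + ∑ j ∈ Icc (k + 1) m, aeval (fun l : Fin k => psum (Fin n) R (l + 1)) (g (j - k))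
        * psum (Fin n) R j}
  zero_mem' := ⟨0, by simp⟩
  add_mem' := by
    rintro _ _ ⟨g, rfl⟩ ⟨g', rfl⟩
    refine ⟨g + g', ?_⟩
    simp only [Pi.add_apply, map_add, add_mul, sum_add_distrib]
    ring
  smul_mem' := by
    rintro c _ ⟨g, rfl⟩
    refine ⟨c • g, ?_⟩
    simp only [Pi.smul_apply, map_smul, smul_add, smul_sum, smul_mul_assoc]

variable {R n k m}

theorem aeval_mem_psumLinearAbove (g : MvPolynomial (Fin k) R) :
    aeval (fun l : Fin k => psum (Fin n) R (l + 1)) g ∈ psumLinearAbove R n k m := by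
  refine ⟨Pi.single 0 g, ?_⟩
  rw [sum_eq_zero fun j hj => ?_]
  · simp
  · rw [Pi.single_eq_of_ne (by grind), map_zero, zero_mul]

theorem aeval_mul_psum_mem_psumLinearAbove (g : MvPolynomial (Fin k) R) {j : ℕ}
    (hj : j ∈ Icc (k + 1) m) :
    aeval (fun l : Fin k => psum (Fin n) R (l + 1)) g * psum (Fin n) R j
      ∈ psumLinearAbove R n k m := by
  refine ⟨Pi.single (j - k) g, ?_⟩
  rw [sum_eq_single_of_mem j hj fun j' hj' hne => ?_]
  · rw [Pi.single_eq_of_ne (by grind), Pi.single_eq_same, map_zero, zero_add]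
  · rw [Pi.single_eq_of_ne (by grind), map_zero, zero_mul]

theorem aeval_psum_monomial_mem_range {t : Fin n →₀ ℕ} (ht : ∀ i ∈ t.support, (i : ℕ) < k)
    (c : R) :
    aeval (fun i : Fin n => psum (Fin n) R (i + 1)) (monomial t c)
      ∈ (aeval (R := R) fun l : Fin k => psum (Fin n) R (l + 1)).range := by
  have hpsum : ∀ i ∈ t.support, psum (Fin n) R ((i : ℕ) + 1)
      ∈ (aeval (R := R) fun l : Fin k => psum (Fin n) R (l + 1)).range :=
    fun i hi => (AlgHom.mem_range _).mpr ⟨X ⟨i, ht i hi⟩, aeval_X _ _⟩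
  rw [aeval_monomial, Finsupp.prod]
  exact Subalgebra.mul_mem _ (Subalgebra.algebraMap_mem _ c)
    (Subalgebra.prod_mem _ fun i hi => Subalgebra.pow_mem _ (hpsum i hi) _)

theorem aeval_psum_monomial_mem_psumLinearAbove {d : ℕ} {t : Fin n →₀ ℕ}
    (ht : Finsupp.weight (fun i : Fin n => (i : ℕ) + 1) t ≤ d) (c : R) :
    aeval (fun i : Fin n => psum (Fin n) R (i + 1)) (monomial t c)
      ∈ psumLinearAbove R n (d / 2) (min d n) := by
  by_cases hlow : ∀ i ∈ t.support, (i : ℕ) < d / 2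
  · obtain ⟨g, hg⟩ := (AlgHom.mem_range _).mp (aeval_psum_monomial_mem_range hlow c)
    exact hg ▸ aeval_mem_psumLinearAbove g
  push Not at hlow
  obtain ⟨i, hi, hik⟩ := hlow
  have hi : t i ≠ 0 := Finsupp.mem_support_iff.mp hi
  have hid : (i : ℕ) + 1 ≤ d := (Finsupp.le_weight_of_ne_zero' _ hi).trans ht
  have hrest : ∀ i' ∈ (t - .single i 1).support, (i' : ℕ) < d / 2 := fun i' hi' => by
    have := Finsupp.two_mul_le_of_mem_support_sub_single ht hi
      (show d < 2 * ((i : ℕ) + 1) by omega) hi'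
    omega
  obtain ⟨g, hg⟩ := (AlgHom.mem_range _).mp (aeval_psum_monomial_mem_range hrest c)
  rw [← Finsupp.sub_add_single_one_cancel hi, monomial_add_single, pow_one, map_mul, aeval_X, ← hg]
  exact aeval_mul_psum_mem_psumLinearAbove g (mem_Icc.mpr ⟨by omega, le_min hid i.isLt⟩)

end LinearAbove

end MvPolynomial

theorem symmetric_half_powerSum_representation_general (n d : ℕ)
    (f : MvPolynomial (Fin n) ℝ) (hf : f.IsSymmetric) (hdeg : f.totalDegree = d) :
    ∃ g : ℕ → MvPolynomial (Fin (d / 2)) ℝ,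
      f = aeval (fun l : Fin (d / 2) => ∑ j : Fin n, X j ^ ((l : ℕ) + 1)) (g 0)
        + ∑ j ∈ Finset.Icc (d / 2 + 1) (min d n),
            aeval (fun l : Fin (d / 2) => ∑ j : Fin n, X j ^ ((l : ℕ) + 1)) (g (j - d / 2))
              * ∑ i : Fin n, X i ^ j := by
  obtain ⟨φ, rfl, hφ⟩ := exists_aeval_eq_and_weight_le_totalDegree
    (fun i : Fin n => isHomogeneous_psum (Fin n) ℝ ((i : ℕ) + 1))
    (hf.mem_range_aeval_psum (Fintype.card_fin n).le)
  have hmem : aeval (fun i : Fin n => psum (Fin n) ℝ (i + 1)) φ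
      ∈ psumLinearAbove ℝ n (d / 2) (min d n) := by
    rw [φ.as_sum, map_sum]
    exact Submodule.sum_mem _ fun t ht =>
      aeval_psum_monomial_mem_psumLinearAbove (hdeg ▸ hφ t ht) _
  exact hmem

/-- A symmetric polynomial of total degree `d ≥ 1` in `n` variables can be written as
`g_0(p_1,…,p_k) + ∑_{j=k+1}^{d'} g_{j-k}(p_1,…,p_k) · p_j`
where `k = ⌊d/2⌋`, `d' = min d n`, and the `g_i` are `k`-variate polynomials. -/
theorem symmetric_half_powerSum_representation (n d : ℕ) (hd : 1 ≤ d)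
    (f : MvPolynomial (Fin n) ℝ) (hf : f.IsSymmetric) (hdeg : f.totalDegree = d) :
    ∃ g : ℕ → MvPolynomial (Fin (d / 2)) ℝ,
      f = aeval (fun l : Fin (d / 2) => ∑ j : Fin n, X j ^ ((l : ℕ) + 1)) (g 0)
        + ∑ j ∈ Finset.Icc (d / 2 + 1) (min d n),
            aeval (fun l : Fin (d / 2) => ∑ j : Fin n, X j ^ ((l : ℕ) + 1)) (g (j - d / 2))
              * ∑ i : Fin n, X i ^ j :=
  symmetric_half_powerSum_representation_general n d f hf hdeg
end

section
/- Let f ∈ ℝ[X_1,…,X_n] be symmetric and let g ∈ ℝ[Z_1,…,Z_n] be the unique polynomial with f = g(p_1,…,p_n). Let V be the n×n Vandermonde matrix with entries V_{i,j} = X_i^{j-1}, regarded as an invertible matrix over the field of rational functions ℝ(X_1,…,X_n), and let ∇f = (∂f/∂X_1, …, ∂f/∂X_n)^t. Then for every j ∈ {1,…,n}: ∂g/∂Z_j = 0 (as a polynomial in ℝ[Z_1,…,Z_n]) if and only if the j-th entry of the vector V^{-1}·∇f (computed over ℝ(X_1,…,X_n)) is zero. In particular, if J ⊆ {1,…,n}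 and (V^{-1}·∇f)_j = 0 for all j ∉ J, then f can be written as a polynomial in the power sums {p_j : j ∈ J} alone. -/
/-!
By the chain rule, `∇f = Jac(p) · (∇g)(p)` with `p = (p_1, …, p_n)`, and `Jac(p)` is the
Vandermonde matrix times `diag(1, …, n)`; hence `(V⁻¹ ∇f)_j = j · (∂g/∂Z_j)(p)`. That Jacobian has
nonzero determinant, which forces the power sums to be algebraically independent: a nonzero
polynomial of minimal degree vanishing at `p` would, by the chain rule again, have all its
partial derivatives vanishing at `p`, hence zero, so it would be a nonzero constant. Thus
`(∂g/∂Z_j)(p) = 0` only if `∂g/∂Z_j = 0`, and a `g` whose derivatives in the variables outside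
`J` vanish does not involve them.
-/

open MvPolynomial Matrix

namespace MvPolynomial

variable {R σ τ : Type*}

section CommSemiring

variable [CommSemiring R]

noncomputable def jacobian (P : τ → MvPolynomial σ R) : Matrix σ τ (MvPolynomial σ R) :=
  of fun i j => pderiv i (P j)

theorem pderiv_aeval [Fintype τ] (P : τ → MvPolynomial σ R) (g : MvPolynomial τ R) (i : σ) :
    pderiv i (aeval P g) = ∑ j, pderiv i (P j) * aeval P (pderiv j g) := by
  classical
  induction g using MvPolynomial.induction_on with
  | C a => simp
  | add p q hp hq => simp only [map_add, hp, hq, mul_add, Finset.sum_add_distrib]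
  | mul_X p k h =>
    simp only [map_mul, aeval_X, pderiv_mul, h, pderiv_X, map_add, mul_add,
      Finset.sum_add_distrib, Finset.sum_mul]
    congr 1
    · exact Finset.sum_congr rfl fun j _ => by ring
    · simp [Pi.single_apply, mul_comm]

theorem jacobian_mulVec_aeval_pderiv [Fintype τ] (P : τ → MvPolynomial σ R)
    (g : MvPolynomial τ R) :
    jacobian P *ᵥ (fun j => aeval P (pderiv j g)) = fun i => pderiv i (aeval P g) := by
  ext i
  simp only [mulVec, dotProduct, jacobian, of_apply, pderiv_aeval]

theorem totalDegree_pderiv_lt {i : σ} {p : MvPolynomial σ R} (h : pderiv i p ≠ 0) :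
    (pderiv i p).totalDegree < p.totalDegree := by
  classical
  have hdeg : ∀ m ∈ (pderiv i p).support, (m.sum fun _ e => e) < p.totalDegree := by
    intro m hm
    rw [mem_support_iff, coeff_pderiv] at hm
    have := le_totalDegree (mem_support_iff.mpr (left_ne_zero_of_mul hm))
    rw [Finsupp.sum_add_index' (fun _ => rfl) (fun _ _ _ => rfl), Finsupp.sum_single_index rfl]
      at this
    omega
  obtain ⟨m, hm⟩ := support_nonempty.mpr h
  exact (Finset.sup_lt_iff ((Nat.zero_le _).trans_lt (hdeg m hm))).mpr hdeg

variable [NoZeroDivisors R] [CharZero R]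

theorem pderiv_eq_zero_iff_notMem_vars {i : σ} {p : MvPolynomial σ R} :
    pderiv i p = 0 ↔ i ∉ p.vars := by
  classical
  refine ⟨fun h hi => ?_, pderiv_eq_zero_of_notMem_vars⟩
  obtain ⟨m, hm, him⟩ := (mem_vars_iff_mem_support i).mp hi
  have hsub : m - Finsupp.single i 1 + Finsupp.single i 1 = m := tsub_add_cancel_of_le
    (Finsupp.single_le_iff.mpr (Nat.one_le_iff_ne_zero.mpr (Finsupp.mem_support_iff.mp him)))
  have := coeff_pderiv (i := i) p (m - Finsupp.single i 1)
  rw [h, coeff_zero, hsub] at this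
  exact mul_ne_zero (mem_support_iff.mp hm) (Nat.cast_add_one_ne_zero _) this.symm

theorem eq_C_of_forall_pderiv_eq_zero {p : MvPolynomial σ R} (h : ∀ i, pderiv i p = 0) :
    p = C (p.coeff 0) :=
  vars_eq_empty_iff_eq_C.mp <| Finset.eq_empty_of_forall_notMem fun i =>
    pderiv_eq_zero_iff_notMem_vars.mp (h i)

theorem exists_rename_eq_of_forall_pderiv_eq_zero {s : Set σ} {p : MvPolynomial σ R}
    (h : ∀ i ∉ s, pderiv i p = 0) : ∃ q : MvPolynomial s R, rename (↑) q = p :=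
  exists_rename_eq_of_vars_subset_range p _ Subtype.val_injective fun i hi => by
    by_contra hs
    exact pderiv_eq_zero_iff_notMem_vars.mp (h i fun his => hs ⟨⟨i, his⟩, rfl⟩) hi

end CommSemiring

section CommRing

variable [CommRing R] [IsDomain R] [CharZero R]

theorem algebraicIndependent_of_det_jacobian_ne_zero [Fintype σ] [DecidableEq σ]
    {P : σ → MvPolynomial σ R} (hP : (jacobian P).det ≠ 0) : AlgebraicIndependent R P := by
  rw [algebraicIndependent_iff]
  intro h hh
  induction hd : h.totalDegree using Nat.strong_induction_on generalizing h with
  | _ d ih =>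
    have hker : (fun j => aeval P (pderiv j h)) = 0 := eq_zero_of_mulVec_eq_zero hP <| by
      simp only [jacobian_mulVec_aeval_pderiv, hh, map_zero]
      rfl
    have hpderiv : ∀ j, pderiv j h = 0 := fun j => by
      by_contra hj
      exact hj (ih _ (hd ▸ totalDegree_pderiv_lt hj) _ (congrFun hker j) rfl)
    rw [eq_C_of_forall_pderiv_eq_zero hpderiv] at hh ⊢
    simpa using hh

end CommRing

section PowerSums

variable (R) [CommRing R] (n : ℕ)

theorem jacobian_psum :
    jacobian (fun l : Fin n => psum (Fin n) R (l + 1)) =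
      vandermonde X * diagonal fun j : Fin n => ((j : ℕ) + 1 : MvPolynomial (Fin n) R) := by
  ext i j
  simp [jacobian, psum, vandermonde_apply, pderiv_X, Pi.single_apply, mul_comm]

theorem vandermonde_mulVec_pderiv_aeval_psum (g : MvPolynomial (Fin n) R) :
    (vandermonde X *ᵥ fun j : Fin n => ((j : ℕ) + 1 : MvPolynomial (Fin n) R) *
        aeval (fun l : Fin n => psum (Fin n) R (l + 1)) (pderiv j g)) =
      fun i => pderiv i (aeval (fun l : Fin n => psum (Fin n) R (l + 1)) g) := by
  rw [← jacobian_mulVec_aeval_pderiv, jacobian_psum, ← mulVec_mulVec]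
  congr 1
  ext j
  rw [mulVec_diagonal]

variable [IsDomain R] [CharZero R]

theorem det_jacobian_psum_ne_zero :
    (jacobian fun l : Fin n => psum (Fin n) R (l + 1)).det ≠ 0 := by
  rw [jacobian_psum, det_mul, det_diagonal]
  exact mul_ne_zero (det_vandermonde_ne_zero_iff.mpr X_injective)
    (Finset.prod_ne_zero_iff.mpr fun j _ => Nat.cast_add_one_ne_zero _)

theorem algebraicIndependent_psum :
    AlgebraicIndependent R fun l : Fin n => psum (Fin n) R (l + 1) :=
  algebraicIndependent_of_det_jacobian_ne_zero (det_jacobian_psum_ne_zero R n)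

end PowerSums

end MvPolynomial

theorem sparse_criterion_vandermonde_general (n : ℕ)
    (f g : MvPolynomial (Fin n) ℝ)
    (hfg : f = aeval (fun l : Fin n => ∑ j : Fin n, X j ^ ((l : ℕ) + 1)) g)
    (V : Matrix (Fin n) (Fin n) (FractionRing (MvPolynomial (Fin n) ℝ)))
    (hV : ∀ i j : Fin n,
      V i j = algebraMap (MvPolynomial (Fin n) ℝ) _ (X i ^ (j : ℕ)))
    (gradf : Fin n → FractionRing (MvPolynomial (Fin n) ℝ))
    (hgrad : ∀ i : Fin n,
      gradf i = algebraMap (MvPolynomial (Fin n) ℝ) _ (pderiv i f)) :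
    (∀ j : Fin n, pderiv j g = 0 ↔ (V⁻¹ *ᵥ gradf) j = 0) ∧
    (∀ J : Set (Fin n), (∀ j ∉ J, (V⁻¹ *ᵥ gradf) j = 0) →
      ∃ g' : MvPolynomial J ℝ,
        f = aeval (fun j : J => ∑ i : Fin n, X i ^ (((j : Fin n) : ℕ) + 1)) g') := by
  set φ := algebraMap (MvPolynomial (Fin n) ℝ) (FractionRing (MvPolynomial (Fin n) ℝ))
  have hφ : Function.Injective φ := IsFractionRing.injective _ _
  set w : Fin n → MvPolynomial (Fin n) ℝ := fun j =>
    ((j : ℕ) + 1) * aeval (fun l : Fin n => psum (Fin n) ℝ (l + 1)) (pderiv j g)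
  have hV' : V = (vandermonde X).map φ := by
    ext i j
    rw [hV, map_apply, vandermonde_apply]
  have hgrad' : gradf = V *ᵥ (φ ∘ w) := by
    ext i
    rw [hgrad, hfg, hV', ← RingHom.map_mulVec, vandermonde_mulVec_pderiv_aeval_psum]
    rfl
  have hdet : IsUnit V.det := by
    rw [hV', isUnit_iff_ne_zero, ← RingHom.mapMatrix_apply, ← RingHom.map_det,
      map_ne_zero_iff _ hφ]
    exact det_vandermonde_ne_zero_iff.mpr X_injective
  have hsolve : V⁻¹ *ᵥ gradf = φ ∘ w := by
    rw [hgrad', mulVec_mulVec, nonsing_inv_mul _ hdet, one_mulVec]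
  have hcrit : ∀ j, pderiv j g = 0 ↔ (V⁻¹ *ᵥ gradf) j = 0 := by
    intro j
    rw [hsolve, Function.comp_apply, map_eq_zero_iff _ hφ, mul_eq_zero,
      or_iff_right (Nat.cast_add_one_ne_zero _),
      map_eq_zero_iff _ (algebraicIndependent_psum ℝ n)]
  refine ⟨hcrit, fun J hJ => ?_⟩
  obtain ⟨g', rfl⟩ :=
    exists_rename_eq_of_forall_pderiv_eq_zero fun j hj => (hcrit j).mpr (hJ j hj)
  exact ⟨g', by rw [hfg, aeval_rename]; rfl⟩

/-- Criterion for `J`-sparsity: with `f = g(p_1,…,p_n)`, `V` the Vandermonde matrix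
`V_{i,j} = X_i^{j-1}` over the field of rational functions `ℝ(X_1,…,X_n)`, and
`∇f` the gradient of `f`, one has `∂g/∂Z_j = 0` iff `(V⁻¹·∇f)_j = 0`.  In particular,
if `(V⁻¹·∇f)_j = 0` for all `j ∉ J`, then `f` is a polynomial in the power sums
`p_j`, `j ∈ J`, alone. -/
theorem sparse_criterion_vandermonde (n : ℕ)
    (f g : MvPolynomial (Fin n) ℝ) (hf : f.IsSymmetric)
    (hfg : f = aeval (fun l : Fin n => ∑ j : Fin n, X j ^ ((l : ℕ) + 1)) g)
    (V : Matrix (Fin n) (Fin n) (FractionRing (MvPolynomial (Fin n) ℝ)))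
    (hV : ∀ i j : Fin n,
      V i j = algebraMap (MvPolynomial (Fin n) ℝ) _ (X i ^ (j : ℕ)))
    (gradf : Fin n → FractionRing (MvPolynomial (Fin n) ℝ))
    (hgrad : ∀ i : Fin n,
      gradf i = algebraMap (MvPolynomial (Fin n) ℝ) _ (pderiv i f)) :
    (∀ j : Fin n, pderiv j g = 0 ↔ (V⁻¹ *ᵥ gradf) j = 0) ∧
    (∀ J : Set (Fin n), (∀ j ∉ J, (V⁻¹ *ᵥ gradf) j = 0) →
      ∃ g' : MvPolynomial J ℝ,
        f = aeval (fun j : J => ∑ i : Fin n, X i ^ (((j : Fin n) : ℕ) + 1)) g') :=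
  sparse_criterion_vandermonde_general n f g hfg V hV gradf hgrad
end

section
/- Let j_1 < j_2 < … < j_d be positive even integers and let S ⊆ ℝ^n be a nonempty set with the property that for all x ∈ S and all y ∈ ℝ^n, if p_{j_l}(y) = p_{j_l}(x) for every l ∈ {1,…,d}, then y ∈ S (this holds in particular when S is a semi-algebraic set described by symmetric {j_1,…,j_d}-sparse polynomials). Then S contains a point y all of whose coordinates are nonnegative and which has at most d distinct nonzero coordinates, i.e., S ∩ A_d^+ ≠ ∅. -/
/-!
Take `x ∈ S` and an even `m` larger than every `j_l`. On the compact set of nonnegative points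
sharing the values of `p_{j_1}, …, p_{j_d}` with `x`, and with `p_m` bounded by its value at `|x|`,
`p_m` attains a minimum at some `y`; since all exponents are even, replacing `w` by `|w|` shows
that `y` minimises `p_m` on the whole common level set. Lagrange multipliers then make every
coordinate `t = y_i` a zero of `∑ Λ_l j_l t^(j_l - 1) + Λ₀ m t^(m - 1)`, a nonzero polynomial with
`d + 1` monomials, which by Descartes' rule of signs has at most `d` positive roots.
-/

open Finset Polynomial

namespace Polynomial

theorem signVariations_lt_card_support {R : Type*} [Semiring R] [LinearOrder R] {P : R[X]}
    (hP : P ≠ 0) : P.signVariations < #P.support := by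
  induction hn : #P.support using Nat.strong_induction_on generalizing P with
  | _ n ih =>
  by_cases hE : P.eraseLead = 0
  · rw [← eraseLead_add_monomial_natDegree_leadingCoeff P, hE, zero_add, signVariations_monomial,
      ← hn]
    exact card_pos.mpr (support_nonempty.mpr hP)
  · have hlt : #P.eraseLead.support < n := by
      rw [← hn, ← card_support_eraseLead_add_one hP]; omega
    calc P.signVariations ≤ P.eraseLead.signVariations + 1 := signVariations_le_eraseLead_succ P
      _ < #P.eraseLead.support + 1 := by gcongr; exact ih _ hlt hE rfl
      _ = n := by rw [card_support_eraseLead_add_one hP, hn]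

theorem ncard_pos_roots_lt_card_support {R : Type*} [CommRing R] [LinearOrder R]
    [IsStrictOrderedRing R] {P : R[X]} (hP : P ≠ 0) {V : Set R}
    (hV : ∀ v ∈ V, 0 < v ∧ P.IsRoot v) : V.ncard < #P.support := by
  have hsub : V ⊆ ↑(P.roots.filter (0 < ·)).toFinset := fun v hv => by
    simpa [mem_roots hP, (hV v hv).1] using (hV v hv).2
  calc V.ncard ≤ #(P.roots.filter (0 < ·)).toFinset := by
        rw [← Set.ncard_coe_finset]; exact Set.ncard_le_ncard hsub (Finset.finite_toSet _)
    _ ≤ P.roots.countP (0 < ·) := by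
        rw [Multiset.countP_eq_card_filter]; exact Multiset.toFinset_card_le _
    _ ≤ P.signVariations := roots_countP_pos_le_signVariations P
    _ < #P.support := signVariations_lt_card_support hP

end Polynomial

theorem ncard_pos_zeros_sum_pow_lt_card {R ι : Type*} [CommRing R] [LinearOrder R]
    [IsStrictOrderedRing R] [Fintype ι] {e : ι → ℕ} (he : Function.Injective e) {a : ι → R}
    (ha : a ≠ 0) {V : Set R}
    (hV : ∀ v ∈ V, 0 < v ∧ ∑ i, a i * v ^ e i = 0) : V.ncard < Fintype.card ι := by
  classical
  set P : R[X] := ∑ i, monomial (e i) (a i)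
  have hcoeff : ∀ i, P.coeff (e i) = a i := fun i => by
    simp [P, coeff_monomial, he.eq_iff]
  have hP : P ≠ 0 := fun h => ha (funext fun i => by simp [← hcoeff i, h])
  have hsupp : P.support ⊆ univ.image e := fun k hk => by
    by_contra h
    simp_all [P, coeff_monomial]
  have hroots : ∀ v ∈ V, 0 < v ∧ P.IsRoot v := fun v hv =>
    ⟨(hV v hv).1, by simpa [P, eval_finsetSum] using (hV v hv).2⟩
  calc V.ncard < #P.support := ncard_pos_roots_lt_card_support hP hroots
    _ ≤ Fintype.card ι := (card_le_card hsupp).trans card_image_le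

section PowerSum

variable {ι : Type*} [Fintype ι]

def powerSum (k : ℕ) (x : ι → ℝ) : ℝ := ∑ i, x i ^ k

theorem powerSum_abs {k : ℕ} (hk : Even k) (x : ι → ℝ) : powerSum k |x| = powerSum k x := by
  simp [powerSum, hk.pow_abs]

@[fun_prop]
theorem continuous_powerSum (k : ℕ) : Continuous (powerSum (ι := ι) k) := by
  unfold powerSum; fun_prop

theorem isBounded_setOf_powerSum_le {k : ℕ} (hk : Even k) (hk0 : k ≠ 0) (c : ℝ) :
    Bornology.IsBounded {x : ι → ℝ | powerSum k x ≤ c} := by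
  refine (Metric.isBounded_iff_subset_closedBall 0).mpr ⟨max 1 c, fun x hx => ?_⟩
  rw [mem_closedBall_zero_iff, pi_norm_le_iff_of_nonneg (by positivity)]
  intro i
  have hxi : |x i| ^ k ≤ c := by
    rw [hk.pow_abs]
    exact (single_le_sum (fun i _ => hk.pow_nonneg (x i)) (mem_univ i)).trans hx
  rcases le_total |x i| 1 with h | h
  · exact h.trans (le_max_left _ _)
  · exact ((le_self_pow₀ h hk0).trans hxi).trans (le_max_right _ _)

theorem hasStrictFDerivAt_powerSum (k : ℕ) (x : ι → ℝ) :
    HasStrictFDerivAt (powerSum k)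
      (∑ i, ((k : ℝ) * x i ^ (k - 1)) • ContinuousLinearMap.proj (R := ℝ) (φ := fun _ => ℝ) i)
      x :=
  HasStrictFDerivAt.fun_sum fun i _ =>
    (hasStrictDerivAt_pow k (x i)).comp_hasStrictFDerivAt x (hasStrictFDerivAt_apply i x)

variable {κ : Type*} {j : κ → ℕ} {m : ℕ}

theorem exists_nonneg_isMinOn_powerSum (hm : Even m) (hm0 : m ≠ 0) (hj : ∀ l, Even (j l))
    (x : ι → ℝ) :
    ∃ y : ι → ℝ, (∀ i, 0 ≤ y i) ∧ (∀ l, powerSum (j l) y = powerSum (j l) x) ∧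
      IsMinOn (powerSum m) {w | ∀ l, powerSum (j l) w = powerSum (j l) y} y := by
  set T := {w : ι → ℝ | (∀ i, 0 ≤ w i) ∧ ∀ l, powerSum (j l) w = powerSum (j l) x}
  set K := T ∩ {w | powerSum m w ≤ powerSum m |x|}
  have habs_mem : ∀ w, (∀ l, powerSum (j l) w = powerSum (j l) x) → |w| ∈ T := fun w hw =>
    ⟨fun i => abs_nonneg (w i), fun l => (powerSum_abs (hj l) w).trans (hw l)⟩
  have hK : IsCompact K := by
    refine Metric.isCompact_of_isClosed_isBounded ?_
      ((isBounded_setOf_powerSum_le hm hm0 _).subset Set.inter_subset_right)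
    refine IsClosed.inter ?_ (isClosed_le (by fun_prop) continuous_const)
    simp only [T, Set.ofPred_and, Set.ofPred_forall]
    exact (isClosed_iInter fun i => isClosed_le continuous_const (continuous_apply i)).inter
      (isClosed_iInter fun l => isClosed_eq (by fun_prop) continuous_const)
  have hxK : |x| ∈ K := ⟨habs_mem x fun _ => rfl, Set.mem_ofPred.mpr le_rfl⟩
  obtain ⟨y, ⟨⟨hy0, hyx⟩, -⟩, hmin⟩ :=
    hK.exists_isMinOn ⟨_, hxK⟩ (continuous_powerSum m).continuousOn
  refine ⟨y, hy0, hyx, fun w hw => ?_⟩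
  have hwT := habs_mem w fun l => (hw l).trans (hyx l)
  rw [Set.mem_ofPred_eq, ← powerSum_abs hm w]
  by_cases hwK : powerSum m |w| ≤ powerSum m |x|
  · exact hmin ⟨hwT, hwK⟩
  · exact (hmin hxK).trans (not_le.mp hwK).le

theorem IsMinOn.exists_multipliers_powerSum [Fintype κ] {y : ι → ℝ}
    (hmin : IsMinOn (powerSum m) {w | ∀ l, powerSum (j l) w = powerSum (j l) y} y) :
    ∃ (Λ : κ → ℝ) (Λ₀ : ℝ), (Λ, Λ₀) ≠ 0 ∧ ∀ i,
      ∑ l, Λ l * (j l * y i ^ (j l - 1)) + Λ₀ * (m * y i ^ (m - 1)) = 0 := by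
  classical
  obtain ⟨Λ, Λ₀, hne, hsum⟩ := hmin.isExtr.localize.exists_multipliers_of_hasStrictFDerivAt
    (fun l => hasStrictFDerivAt_powerSum (j l) y) (hasStrictFDerivAt_powerSum m y)
  refine ⟨Λ, Λ₀, hne, fun i => ?_⟩
  simpa [Pi.single_apply] using DFunLike.congr_fun hsum (Pi.single i 1)

end PowerSum

theorem ncard_pos_range_le_of_multipliers {ι κ : Type*} [Fintype κ] {j : κ → ℕ}
    (hj : Function.Injective j) (hpos : ∀ l, 0 < j l) {m : ℕ} (hm0 : 0 < m)
    (hm : ∀ l, j l < m) {Λ : κ → ℝ} {Λ₀ : ℝ} (hne : (Λ, Λ₀) ≠ 0) {y : ι → ℝ}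
    (hcrit : ∀ i, ∑ l, Λ l * (j l * y i ^ (j l - 1)) + Λ₀ * (m * y i ^ (m - 1)) = 0) :
    (Set.range y ∩ Set.Ioi 0).ncard ≤ Fintype.card κ := by
  set e : Option κ → ℕ := fun o => o.elim (m - 1) (j · - 1)
  set a : Option κ → ℝ := fun o => o.elim (Λ₀ * m) (fun l => Λ l * j l)
  have he : Function.Injective e := by
    rintro (_ | l) (_ | l') h <;> simp only [e, Option.elim_none, Option.elim_some] at h
    · rfl
    · have := hm l'; have := hpos l'; omega
    · have := hm l; have := hpos l; omega
    · have := hpos l; have := hpos l'; rw [hj (by omega : j l = j l')]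
  have ha : a ≠ 0 := by
    contrapose! hne
    have hΛ₀ : Λ₀ = 0 := by simpa [a, hm0.ne'] using congrFun hne none
    have hΛ : Λ = 0 := funext fun l => by simpa [a, (hpos l).ne'] using congrFun hne (some l)
    rw [hΛ, hΛ₀]; rfl
  have hroots : ∀ v ∈ Set.range y ∩ Set.Ioi 0, 0 < v ∧ ∑ o, a o * v ^ e o = 0 := by
    rintro _ ⟨⟨i, rfl⟩, hv⟩
    refine ⟨hv, ?_⟩
    rw [Fintype.sum_option, ← hcrit i, add_comm]
    simp only [a, e, Option.elim, mul_assoc]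
  simpa using ncard_pos_zeros_sum_pow_lt_card he ha hroots

/-- If `S ⊆ ℝ^n` is nonempty and closed under the equivalence of sharing the values of
the power sums `p_{j_1},…,p_{j_d}` for even positive exponents `j_1 < … < j_d`, then `S`
contains a nonnegative point with at most `d` distinct nonzero coordinates. -/
theorem even_sparse_set_meets_Adplus (n d : ℕ) (j : Fin d → ℕ)
    (hmono : StrictMono j) (hpos : ∀ l, 0 < j l) (heven : ∀ l, Even (j l))
    (S : Set (Fin n → ℝ)) (hS : S.Nonempty)
    (hclosed : ∀ x ∈ S, ∀ y : Fin n → ℝ,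
      (∀ l : Fin d, ∑ i, y i ^ j l = ∑ i, x i ^ j l) → y ∈ S) :
    ∃ y ∈ S, (∀ i, 0 ≤ y i) ∧ (Set.range y ∩ Set.Ioi (0 : ℝ)).ncard ≤ d := by
  obtain ⟨x, hx⟩ := hS
  set m := ∑ l, j l + 2
  have hm : Even m := (Finset.even_sum _ fun l _ => heven l).add even_two
  have hm0 : 0 < m := by simp [m]
  have hjm : ∀ l, j l < m := fun l => by
    have := single_le_sum (f := j) (fun _ _ => Nat.zero_le _) (mem_univ l)
    omega
  obtain ⟨y, hy0, hyx, hmin⟩ := exists_nonneg_isMinOn_powerSum hm hm0.ne' heven x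
  obtain ⟨Λ, Λ₀, hne, hcrit⟩ := hmin.exists_multipliers_powerSum
  refine ⟨y, hclosed x hx y hyx, hy0, ?_⟩
  simpa using ncard_pos_range_le_of_multipliers hmono.injective hpos hm0 hjm hne hcrit
end

section
/- Let j_1 < j_2 < … < j_d be positive integers, at least one of which is odd, and let S ⊆ ℝ^n be a nonempty set with the property that for all x ∈ S and all y ∈ ℝ^n, if p_{j_l}(y) = p_{j_l}(x) for every l ∈ {1,…,d}, then y ∈ S (this holds in particular when S is a semi-algebraic set described by symmetric {j_1,…,j_d}-sparse polynomials). Set ℓ := min{j_d, 2d+1}. Then S contains a point with at most ℓ distinct coordinates, i.e., S ∩ A_ℓ ≠ ∅. -/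
/-!
Let `J = j_d` and let `F` be the fibre through a point of `S` of the map
`(p_{j_1}, …, p_{j_d})`. The power sum `p_{J+1}` attains its minimum on `F`: if `J` is even,
`F` is compact, and if `J` is odd, `p_{J+1}` is coercive. At a minimiser `y` the Lagrange
multiplier rule makes the gradients of `p_{j_1}, …, p_{j_d}, p_{J+1}` linearly dependent.
Coordinatewise this says that every `y_i` is a root of `P'`, where `P = ∑ c_o X^{e_o}` is a
nonzero polynomial whose exponents are `j_1, …, j_d, J+1`. Then `P'` has degree at most `J`
and at most `d + 1` monomials. A real polynomial with `s` monomials has at most `2s - 1`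
distinct real roots: divide out the power of `X` and apply Rolle's theorem, which removes
one monomial per step.
-/

open Polynomial Finset

namespace Polynomial

section Support

variable {R : Type*} [Semiring R]

lemma card_support_le_card_support_X_pow_mul (g : R[X]) (r : ℕ) :
    #g.support ≤ #(X ^ r * g).support :=
  card_le_card_of_injOn (· + r)
    (fun e he => by simpa [coeff_X_pow_mul', mem_support_iff] using he)
    (fun _ _ _ _ h => by simpa using h)

variable [IsAddTorsionFree R]

lemma map_succ_support_derivative_subset (p : R[X]) :
    p.derivative.support.map (addRightEmbedding 1) ⊆ p.support := by
  intro e he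
  obtain ⟨n, hn, rfl⟩ := mem_map.mp he
  exact mem_support_derivative.mp hn

lemma card_support_derivative_le (p : R[X]) : #p.derivative.support ≤ #p.support := by
  simpa using card_le_card (map_succ_support_derivative_subset p)

lemma card_support_derivative_lt {p : R[X]} (h : p.coeff 0 ≠ 0) :
    #p.derivative.support < #p.support := by
  have h0 : 0 ∉ p.derivative.support.map (addRightEmbedding 1) := by simp
  have := card_lt_card (ssubset_of_subset_of_ne (map_succ_support_derivative_subset p)
    (fun h' => h0 (h' ▸ mem_support_iff.mpr h)))
  simpa using this

end Support

lemma card_roots_toFinset_erase_zero_le (p : ℝ[X]) :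
    #(p.roots.toFinset.erase 0) ≤ 2 * (#p.support - 1) := by
  induction hs : #p.support using Nat.strong_induction_on generalizing p with
  | _ s ih =>
  rcases eq_or_ne p 0 with rfl | hp
  · simp
  obtain ⟨g, hpg, hXg⟩ := p.exists_eq_pow_rootMultiplicity_mul_and_not_dvd hp 0
  rw [map_zero, sub_zero] at hpg hXg
  rw [X_dvd_iff] at hXg
  set r := p.rootMultiplicity 0
  have hg : g ≠ 0 := right_ne_zero_of_mul (hpg ▸ hp)
  have hsub : p.roots.toFinset.erase 0 ⊆ g.roots.toFinset := by
    intro t ht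
    obtain ⟨ht0, ht⟩ := mem_erase.mp ht
    simp only [Multiset.mem_toFinset, mem_roots hp, mem_roots hg, IsRoot] at ht ⊢
    rw [hpg, eval_mul, eval_pow, eval_X] at ht
    exact (mul_eq_zero.mp ht).resolve_left (pow_ne_zero r ht0)
  have hgs := card_support_le_card_support_X_pow_mul g r
  rw [← hpg] at hgs
  refine (card_le_card hsub).trans ?_
  rcases eq_or_ne g.derivative 0 with hg' | hg'
  · rw [eq_C_of_derivative_eq_zero hg', roots_C]
    simp
  have hg's : 0 < #g.derivative.support := card_pos.mpr (support_nonempty.mpr hg')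
  have hlt := card_support_derivative_lt hXg
  calc #g.roots.toFinset ≤ #g.derivative.roots.toFinset + 1 :=
        card_roots_toFinset_le_derivative g
    _ ≤ #(g.derivative.roots.toFinset.erase 0) + 1 + 1 := by
        have := pred_card_le_card_erase (s := g.derivative.roots.toFinset) (a := 0)
        omega
    _ ≤ 2 * (#g.derivative.support - 1) + 1 + 1 := by
        gcongr
        exact ih _ (by omega) _ rfl
    _ ≤ 2 * (s - 1) := by omega

lemma card_roots_toFinset_le_two_mul_card_support_sub_one (p : ℝ[X]) :
    #p.roots.toFinset ≤ 2 * #p.support - 1 := by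
  rcases eq_or_ne p 0 with rfl | hp
  · simp
  have := card_pos.mpr (support_nonempty.mpr hp)
  have := pred_card_le_card_erase (s := p.roots.toFinset) (a := 0)
  have := card_roots_toFinset_erase_zero_le p
  omega

section Sparse

variable {R : Type*} [Semiring R] {κ : Type*} [Fintype κ] {e : κ → ℕ}

lemma coeff_sum_monomial_of_injective (he : e.Injective) (c : κ → R) (l : κ) :
    (∑ o, monomial (e o) (c o)).coeff (e l) = c l := by
  rw [finsetSum_coeff, sum_eq_single l (fun o _ ho => by simp [coeff_monomial, he.ne ho])
    (by simp)]
  simp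

lemma sum_monomial_ne_zero (he : e.Injective) {c : κ → R} (hc : c ≠ 0) :
    ∑ o, monomial (e o) (c o) ≠ 0 := by
  obtain ⟨l, hl⟩ := Function.ne_iff.mp hc
  intro h
  exact hl (by simpa [h] using (coeff_sum_monomial_of_injective he c l).symm)

lemma card_support_sum_monomial_le (c : κ → R) :
    #(∑ o, monomial (e o) (c o)).support ≤ Fintype.card κ := by
  refine (card_le_card fun n hn => ?_).trans (card_image_le (s := univ) (f := e))
  by_contra h
  simp_all [finsetSum_coeff, coeff_monomial]

end Sparse

end Polynomial

def powSum {ι : Type*} [Fintype ι] (k : ℕ) (z : ι → ℝ) : ℝ := ∑ i, z i ^ k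

section PowSum

variable {ι κ : Type*} [Fintype ι] [Fintype κ]

@[fun_prop]
lemma continuous_powSum (k : ℕ) : Continuous (powSum (ι := ι) k) := by
  unfold powSum; fun_prop

lemma hasStrictFDerivAt_powSum (k : ℕ) (y : ι → ℝ) :
    HasStrictFDerivAt (powSum k)
      (∑ i, ((k : ℝ) * y i ^ (k - 1)) • ContinuousLinearMap.proj (R := ℝ) (φ := fun _ => ℝ) i) y :=
  .fun_sum fun i _ => (hasStrictDerivAt_pow k (y i)).comp_hasStrictFDerivAt y
    (hasStrictFDerivAt_apply i y)

lemma isCompact_setOf_powSum_le {k : ℕ} (hk : Even k) (hk0 : k ≠ 0) (c : ℝ) :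
    IsCompact {z : ι → ℝ | powSum k z ≤ c} := by
  refine (isCompact_univ_pi fun _ => isCompact_Icc (a := -max 1 c) (b := max 1 c))
    |>.of_isClosed_subset (isClosed_le (continuous_powSum k) continuous_const)
    fun z hz i _ => abs_le.mp ?_
  by_contra! h
  have hzi : z i ^ k ≤ c :=
    (single_le_sum (fun i _ => hk.pow_nonneg (z i)) (mem_univ i)).trans hz
  have := (le_self_pow₀ ((le_max_left 1 c).trans h.le) hk0).trans (hk.pow_abs (z i) ▸ hzi)
  exact (h.trans_le this).not_ge (le_max_right 1 c)

lemma IsClosed.exists_isMinOn_powSum_succ {F : Set (ι → ℝ)} (hF : IsClosed F)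
    (hne : F.Nonempty) {k : ℕ} (hk0 : k ≠ 0) {c : ℝ} (hc : ∀ z ∈ F, powSum k z = c) :
    ∃ y ∈ F, IsMinOn (powSum (k + 1)) F y := by
  rcases Nat.even_or_odd k with hk | hk
  · have hFc := (isCompact_setOf_powSum_le hk hk0 c).of_isClosed_subset hF
      fun z hz => (hc z hz).le
    exact hFc.exists_isMinOn hne (continuous_powSum _).continuousOn
  · obtain ⟨x, hx⟩ := hne
    set K := F ∩ {z | powSum (k + 1) z ≤ powSum (k + 1) x}
    have hxK : x ∈ K := ⟨hx, show powSum (k + 1) x ≤ _ from le_rfl⟩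
    have hK : IsCompact K := (isCompact_setOf_powSum_le hk.add_one (by omega) _).inter_left hF
    obtain ⟨y, hyK, hy⟩ := hK.exists_isMinOn ⟨x, hxK⟩ (continuous_powSum _).continuousOn
    refine ⟨y, hyK.1, fun z hz => ?_⟩
    by_cases hzx : powSum (k + 1) z ≤ powSum (k + 1) x
    · exact hy ⟨hz, hzx⟩
    · exact (hy hxK).trans (not_le.mp hzx).le

lemma IsLocalExtrOn.exists_sum_monomial_derivative_eval_eq_zero {e : κ → ℕ} {m : ℕ}
    {y : ι → ℝ} (hy : IsLocalExtrOn (powSum m) {z | ∀ l, powSum (e l) z = powSum (e l) y} y) :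
    ∃ c : Option κ → ℝ, c ≠ 0 ∧
      ∀ i, (∑ o, monomial (Option.elim' m e o) (c o)).derivative.eval (y i) = 0 := by
  have hdep := hy.linear_dependent_of_hasStrictFDerivAt (fun l => hasStrictFDerivAt_powSum _ y)
    (hasStrictFDerivAt_powSum m y)
  obtain ⟨c, hc, o, ho⟩ := Fintype.not_linearIndependent_iff.mp hdep
  refine ⟨c, Function.ne_iff.mpr ⟨o, ho⟩, fun i => ?_⟩
  classical
  simpa [derivative_monomial, eval_finsetSum, Fintype.sum_option, Pi.single_apply, mul_assoc]
    using congrArg (· (Pi.single i 1)) hc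

lemma IsLocalExtrOn.ncard_range_le_of_powSum {e : κ → ℕ} (he : e.Injective)
    (he0 : ∀ l, e l ≠ 0) {m N : ℕ} (hm : ∀ l, e l ≠ m) (hm0 : m ≠ 0)
    (heN : ∀ l, e l ≤ N + 1) (hmN : m ≤ N + 1)
    {y : ι → ℝ} (hy : IsLocalExtrOn (powSum m) {z | ∀ l, powSum (e l) z = powSum (e l) y} y) :
    (Set.range y).ncard ≤ min N (2 * Fintype.card κ + 1) := by
  obtain ⟨c, hc, hroot⟩ := hy.exists_sum_monomial_derivative_eval_eq_zero
  set E : Option κ → ℕ := Option.elim' m e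
  have hE : E.Injective := by
    rintro (_ | a) (_ | b) h <;> simp_all [E, Option.elim', he.eq_iff]
  have hE0 : ∀ o, E o ≠ 0 := by rintro (_ | a) <;> simp [E, hm0, he0]
  have hEN : ∀ o, E o ≤ N + 1 := by rintro (_ | a) <;> simp [E, hmN, heN]
  set P := ∑ o, monomial (E o) (c o)
  have hP0 : P.coeff 0 = 0 := by simp [P, finsetSum_coeff, coeff_monomial, hE0]
  have hQ : P.derivative ≠ 0 := fun h =>
    sum_monomial_ne_zero hE hc (show P = 0 by rw [eq_C_of_derivative_eq_zero h, hP0, C_0])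
  have hsub : Set.range y ⊆ P.derivative.roots.toFinset := by
    rintro _ ⟨i, rfl⟩
    simp [mem_roots hQ, hroot i]
  have hdeg : P.derivative.natDegree ≤ N := by
    have : P.natDegree ≤ N + 1 :=
      natDegree_sum_le_of_forall_le univ _ fun o _ => (natDegree_monomial_le _).trans (hEN o)
    have := natDegree_derivative_le P
    omega
  have hsupp : #P.derivative.support ≤ Fintype.card κ + 1 :=
    (card_support_derivative_le P).trans ((card_support_sum_monomial_le c).trans (by simp))
  calc (Set.range y).ncard ≤ #P.derivative.roots.toFinset := by
        simpa using Set.ncard_le_ncard hsub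
    _ ≤ min N (2 * Fintype.card κ + 1) := le_min
        (((Multiset.toFinset_card_le _).trans (card_roots' _)).trans hdeg)
        ((card_roots_toFinset_le_two_mul_card_support_sub_one _).trans (by omega))

end PowSum

/-- If `S ⊆ ℝ^n` is nonempty and closed under the equivalence of sharing the values of
the power sums `p_{j_1},…,p_{j_d}` for positive exponents `j_1 < … < j_d`, at least one
of which is odd, then `S` contains a point with at most `ℓ := min (j_d) (2d+1)` distinct
coordinates. -/
theorem odd_sparse_set_meets_Al (n d : ℕ) (hd : 0 < d) (j : Fin d → ℕ)
    (hmono : StrictMono j) (hpos : ∀ l, 0 < j l)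
    (S : Set (Fin n → ℝ)) (hS : S.Nonempty)
    (hclosed : ∀ x ∈ S, ∀ y : Fin n → ℝ,
      (∀ l : Fin d, ∑ i, y i ^ j l = ∑ i, x i ^ j l) → y ∈ S) :
    ∃ y ∈ S, (Set.range y).ncard ≤ min (j ⟨d - 1, by omega⟩) (2 * d + 1) := by
  obtain ⟨x, hx⟩ := hS
  set J := j ⟨d - 1, by omega⟩
  have hjJ : ∀ l, j l ≤ J := fun l => hmono.monotone (Fin.le_iff_val_le_val.mpr (by simp; omega))
  set F := {z : Fin n → ℝ | ∀ l, powSum (j l) z = powSum (j l) x}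
  have hF : IsClosed F := by
    simp only [F, Set.ofPred_forall]
    exact isClosed_iInter fun l => isClosed_eq (continuous_powSum _) continuous_const
  obtain ⟨y, hyF, hymin⟩ :=
    hF.exists_isMinOn_powSum_succ (k := J) ⟨x, fun _ => rfl⟩ (hpos _).ne' fun z hz => hz _
  have hfib : {z | ∀ l, powSum (j l) z = powSum (j l) y} = F := by
    ext z
    exact forall_congr' fun l => by rw [hyF l]
  have hextr : IsLocalExtrOn (powSum (J + 1)) {z | ∀ l, powSum (j l) z = powSum (j l) y} y :=
    hfib ▸ hymin.localize.isExtr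
  refine ⟨y, hclosed x hx y hyF, ?_⟩
  simpa using hextr.ncard_range_le_of_powSum hmono.injective
    (fun l => (hpos l).ne') (fun l => by have := hjJ l; omega) (by omega)
    (fun l => (hjJ l).trans (by omega)) le_rfl
end

section
/- Copositive half-degree principle: Let f ∈ ℝ[X_1,…,X_n] be a symmetric polynomial of total degree d ≥ 1, and set k := max{1, ⌊d/2⌋}. Then f(y) ≥ 0 for all y ∈ ℝ^n with all coordinates nonnegative if and only if f(ỹ) ≥ 0 for all ỹ ∈ A_k^+, i.e., for all points of ℝ^n with nonnegative coordinates having at most k distinct positive coordinates. -/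
open Polynomial Finset

/-- Perturbing the constant term of a polynomial with distinct positive roots:
for small `δ` the polynomial `∏ (X - t r) - δ` still factors with positive roots. -/
lemma root_perturb {m : ℕ} (hm : 0 < m) (t : Fin m → ℝ) (hpos : ∀ r, 0 < t r)
    (hinj : Function.Injective t) :
    ∃ η > (0:ℝ), ∀ δ : ℝ, |δ| < η → ∃ x : Fin m → ℝ, (∀ r, 0 < x r) ∧
      (∏ r, (X - C (x r))) = (∏ r, (X - C (t r))) - C δ := by
  classical
  -- choose ε
  obtain ⟨ε, hε0, hεt, hεgap⟩ : ∃ ε > (0:ℝ), (∀ r, ε < t r) ∧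
      ∀ r s, r ≠ s → 4 * ε ≤ |t r - t s| := by
    set S : Finset ℝ := (Finset.univ.image t) ∪
      ((Finset.univ ×ˢ Finset.univ : Finset (Fin m × Fin m)).filter
        (fun p => p.1 ≠ p.2)).image (fun p => |t p.1 - t p.2| / 4) with hS
    have hSne : S.Nonempty := by
      refine Finset.Nonempty.inl ?_
      exact ⟨t ⟨0, hm⟩, Finset.mem_image_of_mem t (Finset.mem_univ _)⟩
    have hSpos : ∀ a ∈ S, 0 < a := by
      intro a ha
      rcases Finset.mem_union.1 ha with h | h
      · obtain ⟨r, -, rfl⟩ := Finset.mem_image.1 h; exact hpos r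
      · obtain ⟨p, hp, rfl⟩ := Finset.mem_image.1 h
        have hne : p.1 ≠ p.2 := (Finset.mem_filter.1 hp).2
        have : t p.1 ≠ t p.2 := fun h => hne (hinj h)
        have : 0 < |t p.1 - t p.2| := abs_pos.2 (sub_ne_zero.2 this)
        linarith
    set ε := S.min' hSne / 2 with hε
    have hmin : 0 < S.min' hSne := hSpos _ (S.min'_mem hSne)
    refine ⟨ε, by positivity, ?_, ?_⟩
    · intro r
      have : S.min' hSne ≤ t r :=
        Finset.min'_le _ _ (Finset.mem_union_left _ (Finset.mem_image_of_mem t (Finset.mem_univ _)))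
      rw [hε]; linarith
    · intro r s hrs
      have hmem : |t r - t s| / 4 ∈ S := by
        refine Finset.mem_union_right _ (Finset.mem_image.2 ⟨(r, s), ?_, rfl⟩)
        simp [hrs]
      have : S.min' hSne ≤ |t r - t s| / 4 := Finset.min'_le _ _ hmem
      rw [hε]; linarith
  set c : ℝ[X] := ∏ r, (X - C (t r)) with hc
  -- endpoint values
  set a : Fin m → ℝ := fun r => c.eval (t r - ε) with ha
  set b : Fin m → ℝ := fun r => c.eval (t r + ε) with hb
  have hab : ∀ r, a r * b r < 0 := by
    intro r
    have h1 : a r * b r = ∏ s, ((t r - t s) ^ 2 - ε ^ 2) := by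
      rw [ha, hb, hc]
      simp only [eval_prod, eval_sub, eval_X, eval_C]
      rw [← Finset.prod_mul_distrib]
      refine Finset.prod_congr rfl fun s _ => by ring
    rw [h1, ← Finset.prod_erase_mul _ _ (Finset.mem_univ r)]
    have h2 : (t r - t r) ^ 2 - ε ^ 2 < 0 := by simp; positivity
    have h3 : 0 < ∏ s ∈ Finset.univ.erase r, ((t r - t s) ^ 2 - ε ^ 2) := by
      refine Finset.prod_pos fun s hs => ?_
      have hsr : s ≠ r := Finset.ne_of_mem_erase hs
      have := hεgap r s (Ne.symm hsr)
      have h4 : 2 * ε ≤ |t r - t s| := by linarith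
      have : (2*ε)^2 ≤ |t r - t s| ^ 2 := by
        apply sq_le_sq' <;> nlinarith [abs_nonneg (t r - t s)]
      rw [sq_abs] at this
      nlinarith
    exact mul_neg_of_pos_of_neg h3 h2
  set η : ℝ := Finset.univ.inf' ⟨⟨0, hm⟩, Finset.mem_univ _⟩ (fun r => min |a r| |b r|) with hη
  have hη0 : 0 < η := by
    rw [hη]
    apply Finset.lt_inf'_iff .. |>.2
    intro r _
    have := hab r
    have ha0 : a r ≠ 0 := fun h => by simp [h] at this
    have hb0 : b r ≠ 0 := fun h => by simp [h] at this
    exact lt_min (abs_pos.2 ha0) (abs_pos.2 hb0)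
  refine ⟨η, hη0, fun δ hδ => ?_⟩
  have hδa : ∀ r, |δ| < |a r| := fun r => lt_of_lt_of_le hδ <| by
    rw [hη]; exact le_trans (Finset.inf'_le _ (Finset.mem_univ r)) (min_le_left _ _)
  have hδb : ∀ r, |δ| < |b r| := fun r => lt_of_lt_of_le hδ <| by
    rw [hη]; exact le_trans (Finset.inf'_le _ (Finset.mem_univ r)) (min_le_right _ _)
  -- for each r find a root of c - C δ in (t r - ε, t r + ε)
  have hroot : ∀ r : Fin m, ∃ x ∈ Set.Ioo (t r - ε) (t r + ε), (c - C δ).eval x = 0 := by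
    intro r
    have hcont : ContinuousOn (fun x => (c - C δ).eval x) (Set.Icc (t r - ε) (t r + ε)) :=
      ((c - C δ).continuous).continuousOn
    have hle : t r - ε ≤ t r + ε := by linarith
    have hea : (c - C δ).eval (t r - ε) = a r - δ := by simp [ha]
    have heb : (c - C δ).eval (t r + ε) = b r - δ := by simp [hb]
    rcases lt_or_ge (a r) 0 with haneg | hapos
    · -- a r < 0 < b r
      have hbpos : 0 < b r := by nlinarith [hab r]
      have h1 : a r - δ < 0 := by
        have := hδa r; rw [abs_of_neg haneg] at this
        cases abs_lt.1 this; linarith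
      have h2 : 0 < b r - δ := by
        have := hδb r; rw [abs_of_pos hbpos] at this
        cases abs_lt.1 this; linarith
      have := intermediate_value_Ioo hle hcont (a := t r - ε) (b := t r + ε)
      rw [hea, heb] at this
      obtain ⟨x, hx, hx0⟩ := this ⟨h1, h2⟩
      exact ⟨x, hx, hx0⟩
    · -- 0 < a r, b r < 0
      have hapos' : 0 < a r := by
        rcases lt_or_eq_of_le hapos with h | h; · exact h
        · exfalso; have h2 := hab r; rw [← h] at h2; simp at h2
      have hbneg : b r < 0 := by nlinarith [hab r]
      have h1 : 0 < a r - δ := by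
        have := hδa r; rw [abs_of_pos hapos'] at this
        cases abs_lt.1 this; linarith
      have h2 : b r - δ < 0 := by
        have := hδb r; rw [abs_of_neg hbneg] at this
        cases abs_lt.1 this; linarith
      have := intermediate_value_Ioo' hle hcont (a := t r - ε) (b := t r + ε)
      rw [hea, heb] at this
      obtain ⟨x, hx, hx0⟩ := this ⟨h2, h1⟩
      exact ⟨x, hx, hx0⟩
  choose x hx hx0 using hroot
  have hxpos : ∀ r, 0 < x r := fun r => by
    have := (hx r).1; have := hεt r; linarith
  have hxinj : Function.Injective x := by
    intro r s hrs
    by_contra hne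
    have h1 := hx r; have h2 := hx s
    have hg := hεgap r s hne
    have : |t r - t s| < 2 * ε := by
      rw [abs_sub_lt_iff]
      constructor <;> [skip; skip] <;>
        · have := h1.1; have := h1.2; have := h2.1; have := h2.2
          rw [hrs] at *; linarith
    linarith [abs_nonneg (t r - t s), hε0]
  refine ⟨x, hxpos, ?_⟩
  -- both sides are monic of degree m and agree on the m distinct values x r
  have hmonic1 : (∏ r, (X - C (x r))).Monic := monic_prod_of_monic _ _ fun r _ => monic_X_sub_C _
  have hmonicc : c.Monic := monic_prod_of_monic _ _ fun r _ => monic_X_sub_C _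
  have hdegc : c.natDegree = m := by
    rw [hc, natDegree_prod]
    · simp
    · intro r _; exact X_sub_C_ne_zero _
  have hdeg1 : (∏ r, (X - C (x r))).natDegree = m := by
    rw [natDegree_prod]
    · simp
    · intro r _; exact X_sub_C_ne_zero _
  have hdegcD : c.degree = (m : WithBot ℕ) := by
    rw [degree_eq_natDegree hmonicc.ne_zero, hdegc]
  have hdegc' : (0:WithBot ℕ) < c.degree := by
    rw [hdegcD]
    exact_mod_cast hm
  have hmonic2 : (c - C δ).Monic := by
    apply hmonicc.sub_of_left
    exact lt_of_le_of_lt degree_C_le hdegc'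
  have hdeg2 : (c - C δ).degree = (m : WithBot ℕ) := by
    rw [degree_sub_C hdegc', hdegcD]
  have hdeg1D : (∏ r, (X - C (x r))).degree = (m : WithBot ℕ) := by
    rw [degree_eq_natDegree hmonic1.ne_zero, hdeg1]
  have key : c - C δ = ∏ r, (X - C (x r)) := by
    apply Polynomial.eq_of_degree_sub_lt_of_eval_finset_eq (Finset.univ.image x)
    · have hcard : (Finset.univ.image x).card = m := by
        rw [Finset.card_image_of_injective _ hxinj, Finset.card_univ, Fintype.card_fin]
      rw [hcard]
      have := degree_sub_lt (hdeg2.trans hdeg1D.symm) hmonic2.ne_zero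
        (by rw [hmonic2.leadingCoeff, hmonic1.leadingCoeff])
      rw [hdeg2] at this
      exact this
    · intro u hu
      obtain ⟨r, -, rfl⟩ := Finset.mem_image.1 hu
      rw [hx0 r, eval_prod]
      rw [Finset.prod_eq_zero (Finset.mem_univ r)]
      simp
  exact key.symm
open MvPolynomial Finset

lemma totalDegree_aeval_le_of_le_one {n m : ℕ} (φ : Fin n → MvPolynomial (Fin m) ℝ)
    (hφ : ∀ i, (φ i).totalDegree ≤ 1) (f : MvPolynomial (Fin n) ℝ) :
    (MvPolynomial.aeval φ f).totalDegree ≤ f.totalDegree := by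
  classical
  conv_lhs => rw [f.as_sum]
  rw [map_sum]
  refine le_trans (totalDegree_finset_sum _ _) (Finset.sup_le fun α hα => ?_)
  rw [MvPolynomial.aeval_monomial]
  refine le_trans (totalDegree_mul _ _) ?_
  have h1 : (algebraMap ℝ (MvPolynomial (Fin m) ℝ) (MvPolynomial.coeff α f)).totalDegree = 0 :=
    totalDegree_C _
  rw [h1, zero_add]
  rw [Finsupp.prod]
  refine le_trans (totalDegree_finset_prod _ _) ?_
  refine le_trans (Finset.sum_le_sum fun i _ => le_trans (totalDegree_pow _ _)
    (Nat.mul_le_mul_left _ (hφ i))) ?_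
  simp only [mul_one]
  refine le_trans (le_of_eq ?_) (MvPolynomial.le_totalDegree hα)
  rw [Finsupp.sum]

lemma aeval_isHomogeneous_of_isWeightedHomogeneous {σ : Type*} [Fintype σ] {m : ℕ}
    (w : Fin m → ℕ) (φ : Fin m → MvPolynomial σ ℝ) (hφ : ∀ i, (φ i).IsHomogeneous (w i))
    {F : MvPolynomial (Fin m) ℝ} {c : ℕ} (hF : F.IsWeightedHomogeneous w c) :
    (MvPolynomial.aeval φ F).IsHomogeneous c := by
  classical
  conv => rw [F.as_sum]
  rw [map_sum]
  refine IsHomogeneous.sum _ _ _ fun α hα => ?_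
  rw [MvPolynomial.aeval_monomial]
  have hw : (Finsupp.weight w) α = c := hF (MvPolynomial.mem_support_iff.1 hα)
  have h1 : (Finsupp.prod α fun i k => φ i ^ k).IsHomogeneous (∑ i ∈ α.support, w i * α i) := by
    rw [Finsupp.prod]
    exact IsHomogeneous.prod _ _ _ fun i _ => (hφ i).pow _
  have h2 : (∑ i ∈ α.support, w i * α i) = c := by
    rw [← hw, Finsupp.weight_apply, Finsupp.sum]
    exact Finset.sum_congr rfl fun i _ => by simp [mul_comm, smul_eq_mul]
  rw [h2] at h1
  simpa using (isHomogeneous_C σ (MvPolynomial.coeff α F)).mul h1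

lemma exists_esymm_rep {m : ℕ} (g : MvPolynomial (Fin m) ℝ) (hg : g.IsSymmetric) :
    ∃ F : MvPolynomial (Fin m) ℝ,
      (MvPolynomial.aeval (fun i : Fin m => MvPolynomial.esymm (Fin m) ℝ ((i : ℕ) + 1))) F = g ∧
      ∀ α ∈ F.support, (Finsupp.weight (fun i : Fin m => (i : ℕ) + 1)) α ≤ g.totalDegree := by
  classical
  set w : Fin m → ℕ := fun i => (i : ℕ) + 1 with hwdef
  set φ : Fin m → MvPolynomial (Fin m) ℝ := fun i => MvPolynomial.esymm (Fin m) ℝ ((i : ℕ) + 1)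
    with hφdef
  have hφhom : ∀ i, (φ i).IsHomogeneous (w i) := by
    intro i
    show (MvPolynomial.esymm (Fin m) ℝ ((i : ℕ) + 1)).IsHomogeneous ((i : ℕ) + 1)
    rw [MvPolynomial.esymm_eq_sum_subtype]
    refine IsHomogeneous.sum _ _ _ fun t _ => ?_
    have := IsHomogeneous.prod (t : Finset (Fin m)) (fun i => (MvPolynomial.X i :
      MvPolynomial (Fin m) ℝ)) (fun _ => 1) (fun i _ => isHomogeneous_X _ _)
    simpa [t.2] using this
  obtain ⟨F, hF⟩ := (esymmAlgHom_fin_bijective ℝ m).2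
    ⟨g, (MvPolynomial.mem_symmetricSubalgebra g).2 hg⟩
  have happ : (MvPolynomial.aeval φ) F = g := by
    have := congrArg Subtype.val hF
    rwa [esymmAlgHom_apply] at this
  refine ⟨F, happ, fun α hα => ?_⟩
  by_contra hlt
  push_neg at hlt
  set c := (Finsupp.weight w) α with hcdef
  set T : Finset ℕ := insert c (weightedHomogeneousComponent_finsupp (w := w) (φ := F)).toFinset
    with hTdef
  have hFdecomp : F = ∑ c' ∈ T, (weightedHomogeneousComponent w c') F := by
    conv_lhs => rw [← sum_weightedHomogeneousComponent w F]
    rw [finsum_eq_sum _ (weightedHomogeneousComponent_finsupp (w := w) (φ := F))]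
    apply Finset.sum_subset (Finset.subset_insert _ _)
    intro c' _ hc'
    have : c' ∉ Function.support fun m => (weightedHomogeneousComponent w m) F := by
      intro h
      exact hc' ((Set.Finite.mem_toFinset _).2 h)
    simpa [Function.mem_support, not_not] using this
  have hcomp : (homogeneousComponent c) g =
      (MvPolynomial.aeval φ) ((weightedHomogeneousComponent w c) F) := by
    conv_lhs => rw [← happ, hFdecomp]
    rw [map_sum, map_sum]
    have heach : ∀ c' ∈ T, (homogeneousComponent c)
        ((MvPolynomial.aeval φ) ((weightedHomogeneousComponent w c') F)) =
        if c' = c then (MvPolynomial.aeval φ) ((weightedHomogeneousComponent w c') F) else 0 := by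
      intro c' _
      rw [homogeneousComponent_of_mem ((mem_homogeneousSubmodule _ _).2
        (aeval_isHomogeneous_of_isWeightedHomogeneous w φ hφhom
          (weightedHomogeneousComponent_isWeightedHomogeneous c' F)))]
      by_cases h : c = c'
      · rw [if_pos h, if_pos h.symm]
      · rw [if_neg h, if_neg (Ne.symm h)]
    rw [Finset.sum_congr rfl heach, Finset.sum_ite_eq' T c
      (fun c' => (MvPolynomial.aeval φ) ((weightedHomogeneousComponent w c') F)),
      if_pos (Finset.mem_insert_self _ _)]
  have hzero : (MvPolynomial.aeval φ) ((weightedHomogeneousComponent w c) F) = 0 := by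
    rw [← hcomp]
    exact homogeneousComponent_eq_zero _ _ hlt
  have hWzero : (weightedHomogeneousComponent w c) F = 0 := by
    apply esymmAlgHom_fin_injective ℝ (le_refl m)
    rw [map_zero]
    ext1
    rw [esymmAlgHom_apply, hzero]
    simp
  have : MvPolynomial.coeff α ((weightedHomogeneousComponent w c) F) = MvPolynomial.coeff α F := by
    rw [coeff_weightedHomogeneousComponent, if_pos hcdef.symm]
  rw [hWzero] at this
  simp only [MvPolynomial.coeff_zero] at this
  exact (MvPolynomial.mem_support_iff.1 hα) this.symm
open MvPolynomial Finset Polynomial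

lemma eval_update_affine {N : ℕ} (F : MvPolynomial (Fin (N + 1)) ℝ)
    (hF : ∀ α ∈ F.support, α (Fin.last N) ≤ 1) (w : Fin (N + 1) → ℝ) (a b : ℝ) :
    ∃ A B : ℝ, ∀ s : ℝ,
      MvPolynomial.eval (Function.update w (Fin.last N) (a + b * s)) F = A + B * s := by
  classical
  set P : (Fin (N + 1) →₀ ℕ) → ℝ := fun α =>
    MvPolynomial.coeff α F * ∏ i : Fin N, w i.castSucc ^ α i.castSucc with hP
  refine ⟨∑ α ∈ F.support, P α * (if α (Fin.last N) = 0 then 1 else a),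
    ∑ α ∈ F.support, P α * (if α (Fin.last N) = 0 then 0 else b), fun s => ?_⟩
  rw [MvPolynomial.eval_eq']
  rw [Finset.sum_mul, ← Finset.sum_add_distrib]
  refine Finset.sum_congr rfl fun α hα => ?_
  rw [Fin.prod_univ_castSucc]
  have h1 : ∀ i : Fin N, Function.update w (Fin.last N) (a + b * s) i.castSucc = w i.castSucc :=
    fun i => Function.update_of_ne (Fin.castSucc_lt_last i).ne _ _
  have h2 : Function.update w (Fin.last N) (a + b * s) (Fin.last N) = a + b * s :=
    Function.update_self _ _ _
  rw [h2]
  have h3 : ∏ i : Fin N, Function.update w (Fin.last N) (a + b * s) i.castSucc ^ α i.castSucc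
      = ∏ i : Fin N, w i.castSucc ^ α i.castSucc :=
    Finset.prod_congr rfl fun i _ => by rw [h1 i]
  rw [h3]
  have hle := hF α hα
  interval_cases h : α (Fin.last N)
  · simp [hP]
  · simp [hP]; ring

lemma prod_X_sub_C_coeff_esymm {ι : Type*} [DecidableEq ι] (s : Finset ι) (z : ι → ℝ) {j : ℕ}
    (hj : j ≤ s.card) :
    (∏ i ∈ s, (Polynomial.X - Polynomial.C (z i))).coeff (s.card - j) =
      (-1) ^ j * ∑ A ∈ Finset.powersetCard j s, ∏ i ∈ A, z i := by
  have h0 : ∀ i, (Polynomial.X - Polynomial.C (z i)) = Polynomial.X + Polynomial.C (-z i) := by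
    intro i; rw [map_neg, sub_eq_add_neg]
  simp_rw [h0]
  rw [Finset.prod_X_add_C_coeff s (fun i => -z i) (Nat.sub_le _ _), Nat.sub_sub_self hj]
  rw [Finset.mul_sum]
  refine Finset.sum_congr rfl fun A hA => ?_
  have hcard : A.card = j := (Finset.mem_powersetCard.1 hA).2
  calc ∏ i ∈ A, -z i = ∏ i ∈ A, (-1) * z i := by simp
    _ = (-1) ^ A.card * ∏ i ∈ A, z i := by rw [Finset.prod_mul_distrib, Finset.prod_const]
    _ = (-1) ^ j * ∏ i ∈ A, z i := by rw [hcard]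

noncomputable def subMap {n m : ℕ} (e : Fin m ↪ Fin n) (z : Fin n → ℝ) :
    Fin n → MvPolynomial (Fin m) ℝ := fun i =>
  if h : ∃ r, e r = i then MvPolynomial.X h.choose else MvPolynomial.C (z i)

noncomputable def fill {n m : ℕ} (e : Fin m ↪ Fin n) (z : Fin n → ℝ) (x : Fin m → ℝ) :
    Fin n → ℝ := fun i => if h : ∃ r, e r = i then x h.choose else z i

lemma choose_spec_emb {n m : ℕ} (e : Fin m ↪ Fin n) (r : Fin m) :
    (⟨r, rfl⟩ : ∃ r', e r' = e r).choose = r := by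
  have h : ∃ r', e r' = e r := ⟨r, rfl⟩
  exact e.injective h.choose_spec

lemma fill_apply_emb {n m : ℕ} (e : Fin m ↪ Fin n) (z : Fin n → ℝ) (x : Fin m → ℝ) (r : Fin m) :
    fill e z x (e r) = x r := by
  unfold fill
  rw [dif_pos ⟨r, rfl⟩]
  congr 1
  exact e.injective (⟨r, rfl⟩ : ∃ r', e r' = e r).choose_spec

lemma fill_apply_notMem {n m : ℕ} (e : Fin m ↪ Fin n) (z : Fin n → ℝ) (x : Fin m → ℝ)
    {i : Fin n} (hi : ¬∃ r, e r = i) : fill e z x i = z i := by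
  unfold fill; rw [dif_neg hi]

lemma fill_self {n m : ℕ} (e : Fin m ↪ Fin n) (z : Fin n → ℝ) :
    fill e z (fun r => z (e r)) = z := by
  funext i
  by_cases h : ∃ r, e r = i
  · obtain ⟨r, rfl⟩ := h
    rw [fill_apply_emb]
  · rw [fill_apply_notMem e z _ h]

lemma eval_aeval_eq {m M : ℕ} (φ : Fin M → MvPolynomial (Fin m) ℝ) (F : MvPolynomial (Fin M) ℝ)
    (x : Fin m → ℝ) :
    MvPolynomial.eval x (MvPolynomial.aeval φ F) =
      MvPolynomial.eval (fun i => MvPolynomial.eval x (φ i)) F := by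
  have haev : ∀ {σ : Type} [Fintype σ] (v : σ → ℝ) (p : MvPolynomial σ ℝ),
      MvPolynomial.aeval v p = MvPolynomial.eval v p := by
    intro σ _ v p
    rw [← MvPolynomial.coe_aeval_eq_eval]
    rfl
  have h1 : (MvPolynomial.aeval x : MvPolynomial (Fin m) ℝ →ₐ[ℝ] ℝ).comp
      (MvPolynomial.aeval φ) = MvPolynomial.aeval (fun i => MvPolynomial.aeval x (φ i)) :=
    comp_aeval _ _
  have h2 := congrArg (fun ψ => ψ F) h1
  simp only [AlgHom.comp_apply] at h2
  rw [← haev, h2]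
  have h3 : (fun i => MvPolynomial.aeval x (φ i)) = (fun i => MvPolynomial.eval x (φ i)) :=
    funext fun i => haev x (φ i)
  rw [h3, haev]

lemma eval_subMap {n m : ℕ} (e : Fin m ↪ Fin n) (z : Fin n → ℝ) (f : MvPolynomial (Fin n) ℝ)
    (x : Fin m → ℝ) :
    MvPolynomial.eval x (MvPolynomial.aeval (subMap e z) f) = MvPolynomial.eval (fill e z x) f := by
  have haev : ∀ {σ : Type} [Fintype σ] (v : σ → ℝ) (p : MvPolynomial σ ℝ),
      MvPolynomial.aeval v p = MvPolynomial.eval v p := by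
    intro σ _ v p
    rw [← MvPolynomial.coe_aeval_eq_eval]
    rfl
  have h1 : (MvPolynomial.aeval x : MvPolynomial (Fin m) ℝ →ₐ[ℝ] ℝ).comp
      (MvPolynomial.aeval (subMap e z)) = MvPolynomial.aeval (fun i => MvPolynomial.aeval x
        (subMap e z i)) := comp_aeval _ _
  have h2 := congrArg (fun φ => φ f) h1
  simp only [AlgHom.comp_apply] at h2
  have h3 : (fun i => MvPolynomial.aeval x (subMap e z i)) = fill e z x := by
    funext i
    unfold subMap fill
    by_cases h : ∃ r, e r = i
    · rw [dif_pos h, dif_pos h, MvPolynomial.aeval_X]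
    · rw [dif_neg h, dif_neg h, MvPolynomial.aeval_C, Algebra.algebraMap_self, RingHom.id_apply]
  rw [← haev, h2, h3, haev]

lemma subMap_symmetric {n m : ℕ} (e : Fin m ↪ Fin n) (z : Fin n → ℝ)
    (f : MvPolynomial (Fin n) ℝ) (hsym : f.IsSymmetric) :
    (MvPolynomial.aeval (subMap e z) f).IsSymmetric := by
  intro σ
  have h1 : (MvPolynomial.rename ⇑σ : MvPolynomial (Fin m) ℝ →ₐ[ℝ] MvPolynomial (Fin m) ℝ).comp
      (MvPolynomial.aeval (subMap e z)) =
      MvPolynomial.aeval (fun i => MvPolynomial.rename ⇑σ (subMap e z i)) := comp_aeval _ _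
  have h2 := congrArg (fun φ => φ f) h1
  simp only [AlgHom.comp_apply] at h2
  have h3 : (fun i => MvPolynomial.rename ⇑σ (subMap e z i)) =
      subMap e z ∘ ⇑(σ.viaEmbedding e) := by
    funext i
    by_cases h : ∃ r, e r = i
    · obtain ⟨r, rfl⟩ := h
      have hv : σ.viaEmbedding e (e r) = e (σ r) := σ.viaEmbedding_apply e r
      simp only [Function.comp_apply, hv]
      unfold subMap
      rw [dif_pos ⟨r, rfl⟩, dif_pos ⟨σ r, rfl⟩, MvPolynomial.rename_X]
      have ha : (⟨r, rfl⟩ : ∃ r', e r' = e r).choose = r :=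
        e.injective (⟨r, rfl⟩ : ∃ r', e r' = e r).choose_spec
      have hb : (⟨σ r, rfl⟩ : ∃ r', e r' = e (σ r)).choose = σ r :=
        e.injective (⟨σ r, rfl⟩ : ∃ r', e r' = e (σ r)).choose_spec
      rw [ha, hb]
    · have hv : σ.viaEmbedding e i = i := by
        apply σ.viaEmbedding_apply_of_notMem
        intro hmem
        exact h (Set.mem_range.1 hmem)
      simp only [Function.comp_apply, hv]
      unfold subMap
      rw [dif_neg h, MvPolynomial.rename_C]
  rw [h2, h3, ← MvPolynomial.aeval_rename, hsym (σ.viaEmbedding e)]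
open MvPolynomial Finset Polynomial
set_option maxHeartbeats 1000000 in
/-- **Copositive half-degree principle.**  A symmetric polynomial `f` of degree `d ≥ 1`
is nonnegative on the nonnegative orthant iff it is nonnegative on all nonnegative
points with at most `k := max 1 ⌊d/2⌋` distinct positive coordinates. -/
theorem copositive_half_degree_principle (n d : ℕ) (hd : 1 ≤ d)
    (f : MvPolynomial (Fin n) ℝ) (hsym : f.IsSymmetric) (hdeg : f.totalDegree = d) :
    (∀ y : Fin n → ℝ, (∀ i, 0 ≤ y i) → 0 ≤ eval y f) ↔
      (∀ y : Fin n → ℝ, (∀ i, 0 ≤ y i) →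
        (Set.range y ∩ Set.Ioi (0 : ℝ)).ncard ≤ max 1 (d / 2) → 0 ≤ eval y f) := by
  classical
  constructor
  · intro H y hy _
    exact H y hy
  intro H y hy
  set k : ℕ := max 1 (d / 2) with hkdef
  have hk1 : 1 ≤ k := le_max_left _ _
  have hdk : d ≤ 2 * k + 1 := by
    have h1 : d / 2 ≤ k := le_max_right _ _
    omega
  -- elementary symmetric functions as real functions
  set En : ℕ → (Fin n → ℝ) → ℝ :=
    fun j z => ∑ A ∈ Finset.powersetCard j Finset.univ, ∏ i ∈ A, z i with hEndef
  have hEncont : ∀ j, Continuous (En j) := by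
    intro j
    exact continuous_finset_sum _ fun A _ =>
      continuous_finset_prod _ fun i _ => continuous_apply i
  have hEn1 : ∀ z : Fin n → ℝ, En 1 z = ∑ i, z i := by
    intro z
    show ∑ A ∈ Finset.powersetCard 1 Finset.univ, ∏ i ∈ A, z i = ∑ i, z i
    rw [Finset.powersetCard_one, Finset.sum_map]
    simp
  have hEnbridge : ∀ (z : Fin n → ℝ) (j : ℕ), j ≤ n →
      (∏ i, (Polynomial.X - Polynomial.C (z i))).coeff (n - j) = (-1) ^ j * En j z := by
    intro z j hj
    have := prod_X_sub_C_coeff_esymm (Finset.univ : Finset (Fin n)) z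
      (j := j) (by simpa using hj)
    simpa using this
  -- the constraint set K
  set K : Set (Fin n → ℝ) :=
    {z | (∀ i, 0 ≤ z i) ∧ ∀ j ∈ Finset.Icc 1 k, En j z = En j y} with hKdef
  have hyK : y ∈ K := ⟨hy, fun _ _ => rfl⟩
  have hKclosed : IsClosed K := by
    have h1 : K = (⋂ i, {z : Fin n → ℝ | 0 ≤ z i}) ∩
        (⋂ j ∈ Finset.Icc 1 k, {z | En j z = En j y}) := by
      ext z
      simp only [hKdef, Set.mem_setOf_eq, Set.mem_inter_iff, Set.mem_iInter]
    rw [h1]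
    exact (isClosed_iInter fun i => isClosed_le continuous_const (continuous_apply i)).inter
      (isClosed_biInter fun j _ => isClosed_eq (hEncont j) continuous_const)
  have hKcompact : IsCompact K := by
    refine IsCompact.of_isClosed_subset (isCompact_univ_pi fun _ => isCompact_Icc
      (a := (0:ℝ)) (b := En 1 y)) hKclosed ?_
    intro z hz
    have hsum : En 1 z = En 1 y := hz.2 1 (Finset.mem_Icc.2 ⟨le_refl 1, hk1⟩)
    intro i _
    refine ⟨hz.1 i, ?_⟩
    have : z i ≤ ∑ i', z i' := Finset.single_le_sum (fun i' _ => hz.1 i') (Finset.mem_univ i)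
    rw [← hEn1 z, hsum] at this
    exact this
  have hfcont : Continuous fun z : Fin n → ℝ => MvPolynomial.eval z f :=
    MvPolynomial.continuous_eval f
  obtain ⟨z₀, hz₀K, hz₀min⟩ := hKcompact.exists_isMinOn ⟨y, hyK⟩ hfcont.continuousOn
  set M : Set (Fin n → ℝ) := K ∩ {z | MvPolynomial.eval z f = MvPolynomial.eval z₀ f} with hMdef
  have hMcompact : IsCompact M := hKcompact.inter_right (isClosed_eq hfcont continuous_const)
  have hMne : M.Nonempty := ⟨z₀, hz₀K, rfl⟩
  obtain ⟨zs, hzsM, hzsmin⟩ := hMcompact.exists_isMinOn hMne (hEncont (k + 1)).continuousOn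
  -- main claim : zs has at most k distinct positive coordinates
  have hcard : (Set.range zs ∩ Set.Ioi 0).ncard ≤ k := by
    by_contra hbig
    push_neg at hbig
    have hfin : (Set.range zs ∩ Set.Ioi 0).Finite := (Set.finite_range zs).inter_of_left _
    have hcard' : k + 1 ≤ hfin.toFinset.card := by
      rw [← Set.ncard_eq_toFinset_card _ hfin]
      omega
    obtain ⟨T, hTsub, hTcard⟩ := Finset.exists_subset_card_eq hcard'
    set tEquiv := Finset.equivFinOfCardEq hTcard
    set t : Fin (k + 1) → ℝ := fun r => ((tEquiv.symm r : T) : ℝ) with htdef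
    have htinj : Function.Injective t := by
      intro r s hrs
      have := Subtype.ext hrs (p := fun u => u ∈ T)
      exact tEquiv.symm.injective this
    have htmem : ∀ r, t r ∈ Set.range zs ∩ Set.Ioi 0 := by
      intro r
      have : (t r) ∈ T := (tEquiv.symm r).2
      exact hfin.mem_toFinset.1 (hTsub this)
    have htpos : ∀ r, 0 < t r := fun r => (htmem r).2
    have htrange : ∀ r, ∃ i, zs i = t r := fun r => (htmem r).1
    choose eFun heFun using htrange
    have heinj : Function.Injective eFun := by
      intro r s hrs
      apply htinj
      rw [← heFun r, ← heFun s, hrs]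
    set e : Fin (k + 1) ↪ Fin n := ⟨eFun, heinj⟩ with hedef
    have hkn : k + 1 ≤ n := by
      have := Fintype.card_le_of_embedding e
      simpa using this
    -- the polynomial g in k+1 variables
    set g : MvPolynomial (Fin (k + 1)) ℝ := MvPolynomial.aeval (subMap e zs) f with hgdef
    have hgsym : g.IsSymmetric := subMap_symmetric e zs f hsym
    have hgd : g.totalDegree ≤ d := by
      rw [hgdef, ← hdeg]
      refine totalDegree_aeval_le_of_le_one _ (fun i => ?_) f
      unfold subMap
      by_cases h : ∃ r, e r = i
      · rw [dif_pos h]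
        exact le_of_eq (MvPolynomial.totalDegree_X _)
      · rw [dif_neg h]
        simp [MvPolynomial.totalDegree_C]
    obtain ⟨F, hFeval, hFweight⟩ := exists_esymm_rep g hgsym
    have hFlast : ∀ α ∈ F.support, α (Fin.last k) ≤ 1 := by
      intro α hα
      by_contra h2
      push_neg at h2
      have hw := hFweight α hα
      have hterm : ((Fin.last k : ℕ) + 1) * α (Fin.last k) ≤
          (Finsupp.weight (fun i : Fin (k+1) => (i : ℕ) + 1)) α := by
        rw [Finsupp.weight_apply, Finsupp.sum]
        have hmem : Fin.last k ∈ α.support := Finsupp.mem_support_iff.2 (by omega)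
        refine le_trans (le_of_eq ?_) (Finset.single_le_sum (f := fun i => α i • ((i:ℕ)+1))
          (fun i _ => Nat.zero_le _) hmem)
        simp [mul_comm, smul_eq_mul]
      have hlast : ((Fin.last k : ℕ) + 1) = k + 1 := by simp
      rw [hlast] at hterm
      have := le_trans hw hgd
      nlinarith [hterm, h2]
    -- the perturbation
    obtain ⟨η, hη0, hpert⟩ := root_perturb (Nat.succ_pos k) t htpos htinj
    set c : ℝ[X] := ∏ r, (Polynomial.X - Polynomial.C (t r)) with hcdef
    set W : ℝ[X] := ∏ i ∈ Finset.univ \ Finset.univ.image e, (Polynomial.X - Polynomial.C (zs i))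
      with hWdef
    have hWmonic : W.Monic := monic_prod_of_monic _ _ fun i _ => monic_X_sub_C _
    have hWdeg : W.natDegree = n - (k + 1) := by
      rw [hWdef, natDegree_prod _ _ (fun i _ => X_sub_C_ne_zero _)]
      simp only [natDegree_X_sub_C, Finset.sum_const, smul_eq_mul, mul_one]
      rw [Finset.card_sdiff_of_subset (Finset.subset_univ _), Finset.card_univ, Fintype.card_fin,
        Finset.card_image_of_injective _ e.injective, Finset.card_univ, Fintype.card_fin]
    have hprodsplit : ∀ x : Fin (k + 1) → ℝ,
        (∏ i, (Polynomial.X - Polynomial.C (fill e zs x i))) =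
          (∏ r, (Polynomial.X - Polynomial.C (x r))) * W := by
      intro x
      rw [← Finset.prod_sdiff (Finset.subset_univ (Finset.univ.image e))]
      have h1 : ∏ i ∈ Finset.univ.image e, (Polynomial.X - Polynomial.C (fill e zs x i))
          = ∏ r, (Polynomial.X - Polynomial.C (x r)) := by
        rw [Finset.prod_image (fun r _ s _ h => e.injective h)]
        exact Finset.prod_congr rfl fun r _ => by rw [fill_apply_emb]
      have h2 : ∏ i ∈ Finset.univ \ Finset.univ.image e,
          (Polynomial.X - Polynomial.C (fill e zs x i)) = W := by
        refine Finset.prod_congr rfl fun i hi => ?_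
        have : ¬∃ r, e r = i := by
          intro ⟨r, hr⟩
          exact (Finset.mem_sdiff.1 hi).2 (Finset.mem_image.2 ⟨r, Finset.mem_univ r, hr⟩)
        rw [fill_apply_notMem e zs x this]
      rw [h1, h2, mul_comm]
    have hfillt : fill e zs t = zs := by
      have : t = fun r => zs (e r) := funext fun r => (heFun r).symm
      rw [this]
      exact fill_self e zs
    have hzsprod : (∏ i, (Polynomial.X - Polynomial.C (zs i))) = c * W := by
      have h := hprodsplit t
      rw [hfillt] at h
      rw [h, hcdef]
    -- values of the esymm functions in k+1 variables
    set Em : ℕ → (Fin (k + 1) → ℝ) → ℝ :=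
      fun j x => ∑ A ∈ Finset.powersetCard j Finset.univ, ∏ r ∈ A, x r with hEmdef
    have hEmbridge : ∀ (x : Fin (k + 1) → ℝ) (j : ℕ), j ≤ k + 1 →
        (∏ r, (Polynomial.X - Polynomial.C (x r))).coeff (k + 1 - j) = (-1) ^ j * Em j x := by
      intro x j hj
      have := prod_X_sub_C_coeff_esymm (Finset.univ : Finset (Fin (k + 1))) x
        (j := j) (by simpa using hj)
      simpa using this
    have hcancel : ∀ (j : ℕ) (u v : ℝ), (-1:ℝ)^j * u = (-1:ℝ)^j * v → u = v := by
      intro j u v h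
      exact mul_left_cancel₀ (pow_ne_zero _ ((by norm_num : (-1:ℝ) ≠ 0))) h
    -- the affine representation
    set wv : Fin (k + 1) → ℝ := fun i => Em ((i : ℕ) + 1) t with hwvdef
    set aa : ℝ := Em (k + 1) t with haadef
    set bb : ℝ := -(-1 : ℝ) ^ (k + 1) with hbbdef
    obtain ⟨A, B, hAB⟩ := eval_update_affine F hFlast wv aa bb
    -- evaluation of f at zs
    have hevalg : ∀ x : Fin (k + 1) → ℝ,
        MvPolynomial.eval (fill e zs x) f =
          MvPolynomial.eval (fun i : Fin (k + 1) =>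
            MvPolynomial.eval x (MvPolynomial.esymm (Fin (k+1)) ℝ ((i : ℕ) + 1))) F := by
      intro x
      rw [← eval_subMap e zs f x, ← hgdef, ← hFeval]
      exact (eval_aeval_eq _ F x)
    have hesymmEm : ∀ (x : Fin (k + 1) → ℝ) (j : ℕ),
        MvPolynomial.eval x (MvPolynomial.esymm (Fin (k+1)) ℝ j) = Em j x := by
      intro x j
      rw [hEmdef]
      simp [MvPolynomial.esymm, MvPolynomial.eval_prod]
    -- eval at zs equals A
    have hzsA : MvPolynomial.eval zs f = A := by
      have h1 := hevalg t
      rw [hfillt] at h1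
      have h2 : (fun i : Fin (k + 1) =>
          MvPolynomial.eval t (MvPolynomial.esymm (Fin (k+1)) ℝ ((i : ℕ) + 1))) = wv := by
        funext i
        rw [hesymmEm, hwvdef]
      have h3 : wv = Function.update wv (Fin.last k) (aa + bb * 0) := by
        rw [mul_zero, add_zero]
        have : aa = wv (Fin.last k) := by
          rw [hwvdef, haadef]
          simp
        rw [this, Function.update_eq_self]
      rw [h1, h2, h3, hAB 0, mul_zero, add_zero]
    -- the key perturbation statement
    have key : ∀ δ : ℝ, |δ| < η → ∃ zz : Fin n → ℝ, zz ∈ K ∧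
        MvPolynomial.eval zz f = A + B * δ ∧
        En (k + 1) zz = En (k + 1) zs - (-1) ^ (k + 1) * δ := by
      intro δ hδ
      obtain ⟨x, hxpos, hxprod⟩ := hpert δ hδ
      set zz : Fin n → ℝ := fill e zs x with hzzdef
      have hzzprod : (∏ i, (Polynomial.X - Polynomial.C (zz i))) = c * W - Polynomial.C δ * W := by
        rw [hzzdef, hprodsplit, hxprod, sub_mul]
      -- En values of zz
      have hEnzz : ∀ j, 1 ≤ j → j ≤ k → En j zz = En j zs := by
        intro j hj1 hjk
        apply hcancel j
        rw [← hEnbridge zz j (by omega), ← hEnbridge zs j (by omega), hzzprod, hzsprod]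
        rw [Polynomial.coeff_sub]
        have : (Polynomial.C δ * W).coeff (n - j) = 0 := by
          apply coeff_eq_zero_of_natDegree_lt
          refine lt_of_le_of_lt (natDegree_mul_le) ?_
          rw [natDegree_C, hWdeg]
          omega
        rw [this, sub_zero]
      have hEnzz1 : En (k + 1) zz = En (k + 1) zs - (-1) ^ (k + 1) * δ := by
        have h1 : (-1:ℝ)^(k+1) * En (k+1) zz = (-1:ℝ)^(k+1) * En (k+1) zs - δ := by
          rw [← hEnbridge zz (k+1) (by omega), ← hEnbridge zs (k+1) (by omega), hzzprod, hzsprod]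
          rw [Polynomial.coeff_sub]
          have : (Polynomial.C δ * W).coeff (n - (k+1)) = δ := by
            rw [Polynomial.coeff_C_mul, ← hWdeg, hWmonic.coeff_natDegree, mul_one]
          rw [this]
        have h2 := congrArg (fun u => (-1:ℝ)^(k+1) * u) h1
        simp only [← mul_assoc, ← pow_add] at h2
        have h3 : ((-1:ℝ))^(k+1) * (-1:ℝ)^(k+1) = 1 := by
          rw [← pow_add]
          simp [pow_mul, Nat.two_mul]
        calc En (k+1) zz = ((-1:ℝ)^(k+1) * (-1:ℝ)^(k+1)) * En (k+1) zz := by rw [h3, one_mul]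
          _ = (-1:ℝ)^(k+1) * ((-1:ℝ)^(k+1) * En (k+1) zz) := by ring
          _ = (-1:ℝ)^(k+1) * ((-1:ℝ)^(k+1) * En (k+1) zs - δ) := by rw [h1]
          _ = En (k+1) zs - (-1)^(k+1) * δ := by
              rw [mul_sub, ← mul_assoc, h3, one_mul]
      -- zz is in K
      have hzzK : zz ∈ K := by
        constructor
        · intro i
          rw [hzzdef]
          by_cases h : ∃ r, e r = i
          · obtain ⟨r, rfl⟩ := h
            rw [fill_apply_emb]
            exact le_of_lt (hxpos r)
          · rw [fill_apply_notMem e zs x h]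
            exact hzsM.1.1 i
        · intro j hj
          obtain ⟨hj1, hjk⟩ := Finset.mem_Icc.1 hj
          rw [hEnzz j hj1 hjk]
          exact hzsM.1.2 j hj
      -- the value of f at zz
      have hveq : (fun i : Fin (k + 1) =>
          MvPolynomial.eval x (MvPolynomial.esymm (Fin (k+1)) ℝ ((i : ℕ) + 1))) =
          Function.update wv (Fin.last k) (aa + bb * δ) := by
        funext i
        rw [hesymmEm]
        by_cases h : i = Fin.last k
        · subst h
          rw [Function.update_self]
          have h1 : (Fin.last k : ℕ) + 1 = k + 1 := by simp
          rw [h1]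
          apply hcancel (k+1)
          rw [← hEmbridge x (k+1) (le_refl _)]
          rw [hxprod, Nat.sub_self, Polynomial.coeff_sub, Polynomial.coeff_C_zero]
          have hc0 : c.coeff 0 = (-1:ℝ)^(k+1) * Em (k+1) t := by
            have h5 := hEmbridge t (k+1) (le_refl _)
            rw [Nat.sub_self] at h5
            exact h5
          have haa : aa = Em (k + 1) t := rfl
          have hbb : bb = -(-1 : ℝ) ^ (k + 1) := rfl
          rw [hc0, haa, hbb]
          have hsq : ((-1:ℝ))^(k+1) * ((-1:ℝ))^(k+1) = 1 := by
            rw [← pow_add]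
            exact Even.neg_one_pow ⟨k+1, by ring⟩
          linear_combination δ * hsq
        · rw [Function.update_of_ne h]
          have hik : (i : ℕ) + 1 ≤ k := by
            have := Fin.val_lt_last h
            omega
          apply hcancel ((i:ℕ)+1)
          rw [← hEmbridge x ((i:ℕ)+1) (by omega), hxprod, Polynomial.coeff_sub]
          have hC : (Polynomial.C δ).coeff (k + 1 - ((i:ℕ)+1)) = 0 := by
            rw [Polynomial.coeff_C, if_neg (by omega)]
          have hwvi : wv i = Em ((i:ℕ)+1) t := rfl
          rw [hC, sub_zero, hwvi]
          rw [← hEmbridge t ((i:ℕ)+1) (by omega)]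
      refine ⟨zz, hzzK, ?_, hEnzz1⟩
      rw [hzzdef, hevalg x, hveq, hAB δ]
    -- B must vanish
    have hBzero : B = 0 := by
      have h1 := key (η / 2) (by rw [abs_of_pos (by linarith)]; linarith)
      have h2 := key (-(η / 2)) (by rw [abs_neg, abs_of_pos (by linarith)]; linarith)
      obtain ⟨zz1, hzz1K, hzz1f, -⟩ := h1
      obtain ⟨zz2, hzz2K, hzz2f, -⟩ := h2
      have hm1 : MvPolynomial.eval z₀ f ≤ MvPolynomial.eval zz1 f := isMinOn_iff.1 hz₀min zz1 hzz1K
      have hm2 : MvPolynomial.eval z₀ f ≤ MvPolynomial.eval zz2 f := isMinOn_iff.1 hz₀min zz2 hzz2K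
      have hz0A : MvPolynomial.eval z₀ f = A := by
        rw [← hzsA]
        exact (hzsM.2).symm
      rw [hzz1f, hz0A] at hm1
      rw [hzz2f, hz0A] at hm2
      nlinarith
    -- now produce the contradiction with the minimality of E (k+1) at zs
    set δs : ℝ := (-1 : ℝ) ^ (k + 1) * (η / 2) with hδsdef
    have hδsabs : |δs| < η := by
      rw [hδsdef, abs_mul, abs_pow, abs_neg, abs_one, one_pow, one_mul,
        abs_of_pos (by linarith)]
      linarith
    obtain ⟨zz, hzzK, hzzf, hzzE⟩ := key δs hδsabs
    have hzzM : zz ∈ M := by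
      refine ⟨hzzK, ?_⟩
      show MvPolynomial.eval zz f = MvPolynomial.eval z₀ f
      rw [hzzf, hBzero, zero_mul, add_zero]
      rw [← hzsA]
      exact hzsM.2
    have hle := isMinOn_iff.1 hzsmin zz hzzM
    rw [hzzE] at hle
    have : (-1:ℝ) ^ (k+1) * δs = η / 2 := by
      rw [hδsdef, ← mul_assoc, ← pow_add]
      simp [pow_mul, Nat.two_mul]
    rw [this] at hle
    linarith
  -- conclude
  have h0 : 0 ≤ MvPolynomial.eval zs f := H zs hzsM.1.1 hcard
  have h1 : MvPolynomial.eval z₀ f ≤ MvPolynomial.eval y f := isMinOn_iff.1 hz₀min y hyK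
  have h2 : MvPolynomial.eval zs f = MvPolynomial.eval z₀ f := hzsM.2
  linarith
end

section
/- Let n > 1 and let ξ ∈ ℝ^n have n pairwise distinct coordinates. Then there exists δ > 0 such that for every ε with 0 < ε < δ, the open ball B_ε(ξ) ⊆ ℝ^n of radius ε around ξ contains points ζ and ν satisfying: (1) p_i(ξ) = p_i(ζ) = p_i(ν) for all i ∈ {1,…,n−1}; (2) p_n(ζ) < p_n(ξ) < p_n(ν); (3) no coordinate of ξ equals a coordinate of ζ, and no coordinate of ξ equals a coordinate of ν. -/
/-!
Perturb `f = ∏ j, (X - ξ j)` to `f + t` for a small constant `t ≠ 0`. Since `f` changes sign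
on each interval `[ξ j - r, ξ j + r]`, so does `f + t`, and the intermediate value theorem gives
`n` distinct real roots `y j` close to the `ξ j`; hence `∏ j, (X - y j) = f + t`. By Vieta only
the last elementary symmetric function changes, by `(-1)^n t`, so by Newton's identities
`p_1, …, p_{n-1}` are unchanged while `p_n` moves by `-n t`. No `ξ i` is a root of `f + t`.
Taking `t > 0` and `t < 0` gives `ζ` and `ν`.
-/

open Polynomial Finset Filter Topology

namespace MvPolynomial

variable {σ R : Type*} [Fintype σ] [CommRing R] {x y : σ → R} {k : ℕ}

theorem eval_psum_eq_of_eval_esymm_eq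
    (he : ∀ m < k, eval x (esymm σ R m) = eval y (esymm σ R m)) :
    ∀ i < k, eval x (psum σ R i) = eval y (psum σ R i) := by
  intro i
  induction i using Nat.strong_induction_on with
  | _ i ih =>
    intro hi
    rcases Nat.eq_zero_or_pos i with rfl | hi0
    · simp [psum]
    simp only [psum_eq_mul_esymm_sub_sum σ R i hi0, map_sub, map_mul, map_sum, map_pow, map_neg,
      map_one, map_natCast, he i hi]
    congr 1
    refine sum_congr rfl fun a ha => ?_
    simp only [mem_filter, HasAntidiagonal.mem_antidiagonal, Set.mem_Ioo] at ha
    rw [he a.1 (by omega), ih a.2 (by omega) (by omega)]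

theorem eval_psum_sub_eval_psum_of_eval_esymm_eq (hk : 0 < k)
    (he : ∀ m < k, eval x (esymm σ R m) = eval y (esymm σ R m)) :
    eval x (psum σ R k) - eval y (psum σ R k) =
      (-1) ^ (k + 1) * k * (eval x (esymm σ R k) - eval y (esymm σ R k)) := by
  have hp := eval_psum_eq_of_eval_esymm_eq he
  have htail : ∀ z : σ → R, eval z (psum σ R k) = (-1) ^ (k + 1) * k * eval z (esymm σ R k) -
      ∑ a ∈ antidiagonal k with a.1 ∈ Set.Ioo 0 k,
        (-1) ^ a.1 * eval z (esymm σ R a.1) * eval z (psum σ R a.2) := fun z => by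
    simp [psum_eq_mul_esymm_sub_sum σ R k hk, map_sum]
  rw [htail x, htail y, sum_congr rfl fun a ha => ?_]
  · ring
  simp only [mem_filter, HasAntidiagonal.mem_antidiagonal, Set.mem_Ioo] at ha
  rw [he a.1 (by omega), hp a.2 (by omega)]

end MvPolynomial

namespace Polynomial

variable {ι R : Type*} [Fintype ι] [CommRing R]

theorem coeff_prod_X_sub_C (x : ι → R) {k : ℕ} (hk : k ≤ Fintype.card ι) :
    (∏ j, (X - C (x j))).coeff k =
      (-1) ^ (Fintype.card ι - k) *
        MvPolynomial.eval x (MvPolynomial.esymm ι R (Fintype.card ι - k)) := by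
  have hcard : Multiset.card (univ.val.map x) = Fintype.card ι := by simp
  rw [← MvPolynomial.aeval_eq_eval, MvPolynomial.aeval_esymm_eq_multiset_esymm, ← hcard,
    ← Multiset.prod_X_sub_C_coeff _ (hcard ▸ hk), Multiset.map_map]
  rfl

theorem eval_esymm_of_prod_X_sub_C_eq_add_C {x y : ι → R} {t : R}
    (h : ∏ j, (X - C (y j)) = ∏ j, (X - C (x j)) + C t) :
    (∀ m < Fintype.card ι, MvPolynomial.eval y (MvPolynomial.esymm ι R m) =
        MvPolynomial.eval x (MvPolynomial.esymm ι R m)) ∧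
      MvPolynomial.eval y (MvPolynomial.esymm ι R (Fintype.card ι)) =
        MvPolynomial.eval x (MvPolynomial.esymm ι R (Fintype.card ι)) +
          (-1) ^ Fintype.card ι * t := by
  constructor
  · intro m hm
    have := congrArg (coeff · (Fintype.card ι - m)) h
    simp only [coeff_add, coeff_C, coeff_prod_X_sub_C _ (Nat.sub_le _ m),
      if_neg (by omega : Fintype.card ι - m ≠ 0), add_zero, Nat.sub_sub_self hm.le] at this
    exact (isUnit_neg_one.pow _).mul_left_cancel this
  · have := congrArg (coeff · 0) h
    simp only [coeff_add, coeff_C, coeff_prod_X_sub_C _ (Nat.zero_le _), Nat.sub_zero,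
      if_true] at this
    have hsq : ((-1 : R) ^ Fintype.card ι) ^ 2 = 1 := by
      rw [← pow_mul, pow_mul', neg_one_sq, one_pow]
    linear_combination (-1) ^ Fintype.card ι * this +
      (MvPolynomial.eval x (MvPolynomial.esymm ι R _) -
        MvPolynomial.eval y (MvPolynomial.esymm ι R _)) * hsq

theorem sum_pow_of_prod_X_sub_C_eq_add_C {x y : ι → R} {t : R}
    (h : ∏ j, (X - C (y j)) = ∏ j, (X - C (x j)) + C t) :
    (∀ i < Fintype.card ι, ∑ j, y j ^ i = ∑ j, x j ^ i) ∧
      ∑ j, y j ^ Fintype.card ι = ∑ j, x j ^ Fintype.card ι - Fintype.card ι * t := by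
  obtain ⟨he, hn⟩ := eval_esymm_of_prod_X_sub_C_eq_add_C h
  have hpsum (z : ι → R) (i : ℕ) :
      MvPolynomial.eval z (MvPolynomial.psum ι R i) = ∑ j, z j ^ i := by
    simp [MvPolynomial.psum]
  refine ⟨fun i hi => by
    simpa only [hpsum] using MvPolynomial.eval_psum_eq_of_eval_esymm_eq he i hi, ?_⟩
  rcases (Fintype.card ι).eq_zero_or_pos with h0 | h0
  · simp [h0]
  have := MvPolynomial.eval_psum_sub_eval_psum_of_eval_esymm_eq h0 he
  rw [hn, hpsum, hpsum] at this
  have hsign : (-1 : R) ^ (Fintype.card ι + 1) * (-1) ^ Fintype.card ι = -1 := by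
    rw [← pow_add, Odd.neg_one_pow ⟨Fintype.card ι, by ring⟩]
  linear_combination this + Fintype.card ι * t * hsign

theorem ne_of_prod_X_sub_C_eq_add_C {x y : ι → R} {t : R}
    (h : ∏ j, (X - C (y j)) = ∏ j, (X - C (x j)) + C t) (ht : t ≠ 0) (i l : ι) : x i ≠ y l := by
  intro hil
  have := congrArg (eval (x i)) h
  rw [eval_add, eval_C, eval_prod, eval_prod, prod_eq_zero (mem_univ l) (by simp [hil]),
    prod_eq_zero (mem_univ i) (by simp), zero_add] at this
  exact ht this.symm

theorem prod_X_sub_C_eq_of_isRoot {K : Type*} [Field K] {p : K[X]} (hp : p.Monic)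
    (hdeg : p.natDegree = Fintype.card ι) {y : ι → K} (hy : Function.Injective y)
    (hroot : ∀ j, p.IsRoot (y j)) : ∏ j, (X - C (y j)) = p :=
  (eq_of_monic_of_dvd_of_natDegree_le (monic_prod_of_monic _ _ fun j _ => monic_X_sub_C (y j)) hp
    (Fintype.prod_dvd_of_coprime (pairwise_coprime_X_sub_C hy) fun j => dvd_iff_isRoot.2 (hroot j))
    (by simp [hdeg])).symm

end Polynomial

theorem exists_mem_Icc_eq_zero_of_mul_nonpos {α : Type*} [ConditionallyCompleteLinearOrder α]
    [TopologicalSpace α] [OrderTopology α] [DenselyOrdered α] {f : α → ℝ} {a b : α} (hab : a ≤ b)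
    (hf : ContinuousOn f (Set.Icc a b)) (h : f a * f b ≤ 0) : ∃ c ∈ Set.Icc a b, f c = 0 := by
  rw [← Set.uIcc_of_le hab] at hf ⊢
  refine intermediate_value_uIcc hf (Set.mem_uIcc.2 ?_)
  rcases mul_nonpos_iff.1 h with h | h
  · exact Or.inr h.symm
  · exact Or.inl h

theorem prod_sub_sub_mul_prod_add_sub_neg {ι : Type*} [Fintype ι] (x : ι → ℝ) (j : ι) {r : ℝ}
    (hr : 0 < r) (hgap : ∀ k, k ≠ j → r < |x j - x k|) :
    (∏ k, (x j - r - x k)) * ∏ k, (x j + r - x k) < 0 := by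
  classical
  rw [← prod_mul_distrib, ← mul_prod_erase _ _ (mem_univ j)]
  refine mul_neg_of_neg_of_pos (by nlinarith) (prod_pos fun k hk => ?_)
  have := hgap k (ne_of_mem_erase hk)
  nlinarith [sq_abs (x j - x k), abs_nonneg (x j - x k)]

theorem eventually_two_mul_lt_abs_sub {ι : Type*} [Finite ι] {x : ι → ℝ}
    (hx : Function.Injective x) : ∀ᶠ r in 𝓝 (0 : ℝ), ∀ j k, j ≠ k → 2 * r < |x j - x k| :=
  eventually_all.2 fun j => eventually_all.2 fun k => by
    by_cases hjk : j = k
    · exact Eventually.of_forall fun _ h => absurd hjk h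
    have hpos : 0 < |x j - x k| / 2 := by
      have := abs_pos.2 (sub_ne_zero.2 (hx.ne hjk)); positivity
    filter_upwards [eventually_lt_nhds hpos] with r hr _
    linarith

theorem eventually_exists_prod_X_sub_C_eq_add_C {ι : Type*} [Fintype ι] [Nonempty ι]
    {x : ι → ℝ} (hx : Function.Injective x) {U : Set (ι → ℝ)} (hU : U ∈ 𝓝 x) :
    ∀ᶠ t in 𝓝 (0 : ℝ), ∃ y ∈ U, ∏ j, (X - C (y j)) = ∏ j, (X - C (x j)) + C t := by
  obtain ⟨r, hr, hrU, hrgap⟩ :=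
    ((eventually_closedBall_subset hU).and (eventually_two_mul_lt_abs_sub hx)).exists_gt
  set f : ℝ → ℝ := fun c => ∏ k, (c - x k)
  have hsign (j : ι) : f (x j - r) * f (x j + r) < 0 :=
    prod_sub_sub_mul_prod_add_sub_neg x j hr fun k hk => by linarith [hrgap j k hk.symm]
  have hperturbed : ∀ᶠ t in 𝓝 (0 : ℝ), ∀ j, (f (x j - r) + t) * (f (x j + r) + t) < 0 :=
    eventually_all.2 fun j =>
      (by fun_prop : Continuous fun t => (f (x j - r) + t) * (f (x j + r) + t)).continuousAt
        |>.eventually_lt continuousAt_const (by simpa using hsign j)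
  filter_upwards [hperturbed] with t ht
  have hroot (j : ι) : ∃ c ∈ Set.Icc (x j - r) (x j + r), f c + t = 0 :=
    exists_mem_Icc_eq_zero_of_mul_nonpos (by linarith) (by fun_prop) (ht j).le
  choose y hyI hy0 using hroot
  have hyx (j : ι) : |y j - x j| ≤ r :=
    abs_sub_le_iff.2 ⟨by linarith [(hyI j).2], by linarith [(hyI j).1]⟩
  refine ⟨y, hrU ((dist_pi_le_iff hr.le).2 fun j => (Real.dist_eq _ _).trans_le (hyx j)), ?_⟩
  have hmonic : (∏ j, (X - C (x j))).Monic :=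
    monic_prod_of_monic _ _ fun j _ => monic_X_sub_C (x j)
  refine prod_X_sub_C_eq_of_isRoot (hmonic.add_of_left ?_) (by simp) ?_ fun j => ?_
  · rw [degree_eq_natDegree hmonic.ne_zero]
    refine degree_C_le.trans_lt ?_
    simp [Fintype.card_pos]
  · intro j k hjk
    by_contra hne
    have hyxj := hyx j
    rw [hjk] at hyxj
    have := abs_sub_le (x j) (y k) (x k)
    rw [abs_sub_comm (x j) (y k)] at this
    linarith [hrgap j k hne, hyx k]
  · simpa [f, eval_prod] using hy0 j

/-- Perturbation lemma: around any point `ξ ∈ ℝ^n` with pairwise distinct coordinates,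
every small enough Euclidean ball contains points `ζ, ν` with the same power sums
`p_1,…,p_{n-1}` as `ξ`, with `p_n(ζ) < p_n(ξ) < p_n(ν)`, and such that no coordinate
of `ξ` occurs among the coordinates of `ζ` or of `ν`. -/
theorem powerSum_perturbation (n : ℕ) (hn : 1 < n)
    (ξ : EuclideanSpace ℝ (Fin n)) (hξ : Function.Injective ξ) :
    ∃ δ > (0 : ℝ), ∀ ε : ℝ, 0 < ε → ε < δ →
      ∃ ζ ∈ Metric.ball ξ ε, ∃ ν ∈ Metric.ball ξ ε,
        (∀ i : ℕ, 1 ≤ i → i ≤ n - 1 →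
            (∑ l, ξ l ^ i = ∑ l, ζ l ^ i) ∧ (∑ l, ξ l ^ i = ∑ l, ν l ^ i)) ∧
        (∑ l, ζ l ^ n < ∑ l, ξ l ^ n) ∧ (∑ l, ξ l ^ n < ∑ l, ν l ^ n) ∧
        (∀ i l : Fin n, ξ i ≠ ζ l ∧ ξ i ≠ ν l) := by
  have : Nonempty (Fin n) := ⟨⟨0, by omega⟩⟩
  -- the construction works in every ball, so any `δ` will do
  refine ⟨1, one_pos, fun ε hε _ => ?_⟩
  have hU : WithLp.toLp 2 ⁻¹' Metric.ball ξ ε ∈ 𝓝 (WithLp.ofLp ξ) :=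
    (PiLp.continuous_toLp 2 _).continuousAt.preimage_mem_nhds (Metric.ball_mem_nhds ξ hε)
  have hpert := eventually_exists_prod_X_sub_C_eq_add_C hξ hU
  obtain ⟨s, hs, ζ, hζ, hζs⟩ := hpert.exists_gt
  obtain ⟨u, hu, ν, hν, hνu⟩ := hpert.exists_lt
  obtain ⟨hζi, hζn⟩ := sum_pow_of_prod_X_sub_C_eq_add_C hζs
  obtain ⟨hνi, hνn⟩ := sum_pow_of_prod_X_sub_C_eq_add_C hνu
  simp only [Fintype.card_fin] at hζi hζn hνi hνn
  have hn0 : (0 : ℝ) < n := Nat.cast_pos.2 (by omega)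
  refine ⟨WithLp.toLp 2 ζ, hζ, WithLp.toLp 2 ν, hν,
    fun i _ hi => ⟨(hζi i (by omega)).symm, (hνi i (by omega)).symm⟩, ?_, ?_,
    fun i l => ⟨ne_of_prod_X_sub_C_eq_add_C hζs hs.ne' i l,
      ne_of_prod_X_sub_C_eq_add_C hνu hu.ne i l⟩⟩
  · linarith [mul_pos hn0 hs]
  · linarith [mul_neg_of_pos_of_neg hn0 hu]
end
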